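/- arXiv:1509.04323 — 6 statements merged into one kernel-verified Lean document; each statement's English description precedes it below -/
import Mathlib

section
/- For a nonzero discriminant D written as D = d·ℓ² with d a fundamental discriminant and ℓ > 0, define ψ_D(n) = (d / (n/gcd(n,ℓ))) (Kronecker symbol). Then for Re(s) > 1, the Dirichlet series L(s,ψ_D) = ∑_{n≥1} ψ_D(n) n^{-s} satisfies L(s,ψ_D) = L(s,ψ_d) · ∏_{p | ℓ} [1 + (1 - ψ_d(p)) ∑_{j=1}^{ord_p(ℓ)} p^{-js}]. -/
/-- The Kronecker symbol at a prime `p`. For odd `p` this is the Legendre/Jacobi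
symbol; for `p = 2` it is `0` if `d` is even, `1` if `d ≡ ±1 (mod 8)`, `-1` otherwise. -/
def kronP (d : ℤ) (p : ℕ) : ℤ :=
  if p = 2 then (if d % 2 = 0 then 0 else if d % 8 = 1 ∨ d % 8 = 7 then 1 else -1)
  else jacobiSym d p

/-- The Kronecker symbol `(d / n)` for `n ≥ 1`, extended multiplicatively over the
prime factorization of `n`. -/
def kron (d : ℤ) (n : ℕ) : ℤ :=
  ((n.primeFactorsList).map (kronP d)).prod

/-- `d` is a fundamental discriminant. -/
def IsFundamentalDiscriminant (d : ℤ) : Prop :=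
  (d % 4 = 1 ∧ Squarefree d) ∨
  (d % 4 = 0 ∧ Squarefree (d / 4) ∧ (d / 4 % 4 = 2 ∨ d / 4 % 4 = 3))

/-!
Both `ψ_D` and `ψ_d` are multiplicative, and at a prime power
`ψ_D(p^i) = ψ_d(p)^(i - min(i, v))` with `v = ord_p ℓ`. The telescoping identity
`χ^(i-t) = χ^i + (1 - χ) ∑_{j=1}^{t} χ^(i-j)` therefore gives `ψ_D = G ⋆ ψ_d`, where `G` is the
multiplicative function supported on the divisors of `ℓ` with `G(p^j) = 1 - ψ_d(p)` for
`1 ≤ j ≤ v`. So `L(s, ψ_D) = L(s, G) L(s, ψ_d)`, and `L(s, G)` is a finite sum over the divisors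
of `ℓ`, which factors as the Euler product over `p ∣ ℓ`.
-/

open ArithmeticFunction Finset

lemma kron_one (d : ℤ) : kron d 1 = 1 := by simp [kron]

lemma kron_mul (d : ℤ) {m n : ℕ} (hm : m ≠ 0) (hn : n ≠ 0) :
    kron d (m * n) = kron d m * kron d n := by
  unfold kron
  rw [← List.prod_append, ← List.map_append]
  exact ((Nat.perm_primeFactorsList_mul hm hn).map _).prod_eq

lemma kron_prime_pow (d : ℤ) {p : ℕ} (hp : p.Prime) (k : ℕ) :
    kron d (p ^ k) = kron d p ^ k := by
  simp [kron, hp.primeFactorsList_pow, Nat.primeFactorsList_prime hp]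

lemma abs_kronP_le_one (d : ℤ) (p : ℕ) : |kronP d p| ≤ 1 := by
  unfold kronP
  split_ifs
  · simp
  · simp
  · simp
  · rcases jacobiSym.trichotomy d p with h | h | h <;> simp [h]

lemma abs_kron_le_one (d : ℤ) (n : ℕ) : |kron d n| ≤ 1 := by
  unfold kron
  induction n.primeFactorsList with
  | nil => simp
  | cons p l ih =>
    rw [List.map_cons, List.prod_cons, abs_mul]
    exact mul_le_one₀ (abs_kronP_le_one d p) (abs_nonneg _) ih

lemma norm_kron_le_one (d : ℤ) (n : ℕ) : ‖(kron d n : ℂ)‖ ≤ 1 := by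
  rw [Complex.norm_intCast]
  exact_mod_cast abs_kron_le_one d n

lemma Nat.Prime.gcd_pow_eq_pow_min_factorization {p ℓ : ℕ} (hp : p.Prime) (hℓ : ℓ ≠ 0) (i : ℕ) :
    Nat.gcd (p ^ i) ℓ = p ^ min i (ℓ.factorization p) := by
  apply Nat.dvd_antisymm
  · obtain ⟨k, hki, hk⟩ := (Nat.dvd_prime_pow hp).1 (Nat.gcd_dvd_left (p ^ i) ℓ)
    have hkℓ : k ≤ ℓ.factorization p :=
      (hp.pow_dvd_iff_le_factorization hℓ).1 (hk ▸ Nat.gcd_dvd_right (p ^ i) ℓ)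
    exact hk ▸ pow_dvd_pow p (le_min hki hkℓ)
  · exact Nat.dvd_gcd (pow_dvd_pow p (min_le_left _ _))
      ((hp.pow_dvd_iff_le_factorization hℓ).2 (min_le_right _ _))

lemma Finset.sum_range_succ_eq_add_sum_Icc {M : Type*} [AddCommMonoid M] (f : ℕ → M) (n : ℕ) :
    ∑ j ∈ range (n + 1), f j = f 0 + ∑ j ∈ Icc 1 n, f j := by
  rw [Nat.range_succ_eq_Icc_zero, ← Finset.insert_Icc_succ_left_eq_Icc (Nat.zero_le n),
    sum_insert (by simp)]
  rfl

lemma pow_sub_eq_pow_add_one_sub_mul_sum {R : Type*} [CommRing R] (χ : R) {i t : ℕ}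
    (ht : t ≤ i) : χ ^ (i - t) = χ ^ i + (1 - χ) * ∑ j ∈ Icc 1 t, χ ^ (i - j) := by
  induction t with
  | zero => simp
  | succ t ih =>
    rw [sum_Icc_succ_top (by omega), mul_add, ← add_assoc, ← ih (by omega),
      show i - t = i - (t + 1) + 1 by omega, pow_succ]
    ring

lemma ArithmeticFunction.IsMultiplicative.sum_divisors_eq_prod {R : Type*} [CommSemiring R]
    {f : ArithmeticFunction R} (hf : f.IsMultiplicative) {n : ℕ} (hn : n ≠ 0) :
    ∑ k ∈ n.divisors, f k =
      ∏ p ∈ n.primeFactors, ∑ j ∈ range (n.factorization p + 1), f (p ^ j) := by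
  rw [← coe_mul_zeta_apply,
    (hf.mul isMultiplicative_zeta.natCast).multiplicative_factorization _ hn]
  exact prod_congr n.support_factorization fun p hp => by
    dsimp only
    rw [coe_mul_zeta_apply, Nat.sum_divisors_prime_pow (Nat.prime_of_mem_primeFactors hp)]

lemma LSeries_eq_tsum_succ {f : ℕ → ℂ} {s : ℂ} (hf : LSeriesSummable f s) :
    LSeries f s = ∑' n : ℕ, f (n + 1) / ((n : ℂ) + 1) ^ s := by
  rw [LSeries, hf.tsum_eq_zero_add, LSeries.term_zero, zero_add]
  exact tsum_congr fun n => by rw [LSeries.term_of_ne_zero n.succ_ne_zero, Nat.cast_succ]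

noncomputable def cpowNeg (s : ℂ) : ArithmeticFunction ℂ :=
  ⟨fun n => if n = 0 then 0 else (n : ℂ) ^ (-s), if_pos rfl⟩

lemma cpowNeg_apply (s : ℂ) {n : ℕ} (hn : n ≠ 0) : cpowNeg s n = (n : ℂ) ^ (-s) :=
  if_neg hn

lemma isMultiplicative_cpowNeg (s : ℂ) : (cpowNeg s).IsMultiplicative := by
  refine IsMultiplicative.iff_ne_zero.2 ⟨by simp [cpowNeg_apply], fun {m n} hm hn _ => ?_⟩
  rw [cpowNeg_apply s (mul_ne_zero hm hn), cpowNeg_apply s hm, cpowNeg_apply s hn, Nat.cast_mul,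
    Complex.natCast_mul_natCast_cpow]

lemma cpowNeg_apply_prime_pow (s : ℂ) {p : ℕ} (hp : p ≠ 0) (j : ℕ) :
    cpowNeg s (p ^ j) = (p : ℂ) ^ (-(j : ℂ) * s) := by
  rw [cpowNeg_apply s (pow_ne_zero j hp), Nat.cast_pow, ← Complex.natCast_cpow_natCast_mul,
    mul_neg, neg_mul]

section Kronecker

variable (d : ℤ) (ℓ : ℕ)

noncomputable def kronAF : ArithmeticFunction ℂ :=
  ⟨fun n => if n = 0 then 0 else (kron d n : ℂ), if_pos rfl⟩

noncomputable def kronGcdAF : ArithmeticFunction ℂ :=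
  ⟨fun n => if n = 0 then 0 else (kron d (n / n.gcd ℓ) : ℂ), if_pos rfl⟩

noncomputable def correctionAF : ArithmeticFunction ℂ :=
  ⟨fun n => if n ∣ ℓ ∧ n ≠ 0 then ∏ p ∈ n.primeFactors, (1 - (kron d p : ℂ)) else 0,
    if_neg fun h => h.2 rfl⟩

variable {d ℓ}

lemma kronAF_apply {n : ℕ} (hn : n ≠ 0) : kronAF d n = kron d n := if_neg hn

lemma kronGcdAF_apply {n : ℕ} (hn : n ≠ 0) : kronGcdAF d ℓ n = kron d (n / n.gcd ℓ) := if_neg hn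

variable (d ℓ)

lemma isMultiplicative_kronAF : (kronAF d).IsMultiplicative := by
  refine IsMultiplicative.iff_ne_zero.2 ⟨by simp [kronAF_apply, kron_one], fun {m n} hm hn _ => ?_⟩
  rw [kronAF_apply (mul_ne_zero hm hn), kronAF_apply hm, kronAF_apply hn, kron_mul d hm hn,
    Int.cast_mul]

lemma isMultiplicative_kronGcdAF : (kronGcdAF d ℓ).IsMultiplicative := by
  refine IsMultiplicative.iff_ne_zero.2
    ⟨by simp [kronGcdAF_apply, kron_one], fun {m n} hm hn hmn => ?_⟩
  have hquot {a : ℕ} (ha : a ≠ 0) : a / a.gcd ℓ ≠ 0 :=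
    (Nat.div_pos (Nat.gcd_le_left ℓ ha.bot_lt) (Nat.gcd_pos_of_pos_left ℓ ha.bot_lt)).ne'
  rw [kronGcdAF_apply (mul_ne_zero hm hn), kronGcdAF_apply hm, kronGcdAF_apply hn,
    Nat.gcd_comm, hmn.gcd_mul, Nat.gcd_comm ℓ m, Nat.gcd_comm ℓ n,
    ← Nat.div_mul_div_comm (Nat.gcd_dvd_left m ℓ) (Nat.gcd_dvd_left n ℓ),
    kron_mul d (hquot hm) (hquot hn), Int.cast_mul]

lemma isMultiplicative_correctionAF : (correctionAF d ℓ).IsMultiplicative := by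
  refine IsMultiplicative.iff_ne_zero.2 ⟨by simp [correctionAF], fun {m n} hm hn hmn => ?_⟩
  have hdvd : m * n ∣ ℓ ↔ m ∣ ℓ ∧ n ∣ ℓ :=
    ⟨fun h => ⟨dvd_of_mul_right_dvd h, dvd_of_mul_left_dvd h⟩,
      fun h => hmn.mul_dvd_of_dvd_of_dvd h.1 h.2⟩
  simp only [correctionAF, coe_mk, ne_eq, mul_eq_zero, hm, hn, or_self, not_false_eq_true,
    and_true, hdvd, Nat.primeFactors_mul hm hn, prod_union hmn.disjoint_primeFactors]
  by_cases hm' : m ∣ ℓ <;> by_cases hn' : n ∣ ℓ <;> simp [hm', hn']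

variable {d ℓ}

lemma kronGcdAF_apply_prime_pow (hℓ : ℓ ≠ 0) {p : ℕ} (hp : p.Prime) (i : ℕ) :
    kronGcdAF d ℓ (p ^ i) = (kron d p : ℂ) ^ (i - min i (ℓ.factorization p)) := by
  rw [kronGcdAF_apply (pow_ne_zero i hp.ne_zero), hp.gcd_pow_eq_pow_min_factorization hℓ,
    Nat.pow_div (min_le_left _ _) hp.pos, kron_prime_pow d hp, Int.cast_pow]

lemma correctionAF_apply_prime_pow (hℓ : ℓ ≠ 0) {p : ℕ} (hp : p.Prime) {j : ℕ} (hj : j ≠ 0) :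
    correctionAF d ℓ (p ^ j) = if j ≤ ℓ.factorization p then 1 - (kron d p : ℂ) else 0 := by
  simp only [correctionAF, coe_mk, hp.pow_dvd_iff_le_factorization hℓ, ne_eq,
    pow_ne_zero j hp.ne_zero, not_false_eq_true, and_true, Nat.primeFactors_prime_pow hj hp,
    prod_singleton]

lemma term_correctionAF_eq_zero (hℓ : ℓ ≠ 0) (s : ℂ) {n : ℕ} (hn : n ∉ ℓ.divisors) :
    LSeries.term (correctionAF d ℓ ·) s n = 0 := by
  have hG : correctionAF d ℓ n = 0 := if_neg fun h => hn (Nat.mem_divisors.2 ⟨h.1, hℓ⟩)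
  simp [LSeries.term_def, hG]

variable (d)

lemma kronGcdAF_eq_correctionAF_mul_kronAF (hℓ : ℓ ≠ 0) :
    kronGcdAF d ℓ = correctionAF d ℓ * kronAF d := by
  refine (IsMultiplicative.eq_iff_eq_on_prime_powers _ (isMultiplicative_kronGcdAF d ℓ) _
    ((isMultiplicative_correctionAF d ℓ).mul (isMultiplicative_kronAF d))).2 fun p i hp => ?_
  set v := ℓ.factorization p
  set χ : ℂ := (kron d p : ℂ)
  have hterm (j : ℕ) (hj : j ∈ Icc 1 i) :
      correctionAF d ℓ (p ^ j) * kronAF d (p ^ i / p ^ j) =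
        if j ≤ v then (1 - χ) * χ ^ (i - j) else 0 := by
    obtain ⟨hj1, hji⟩ := mem_Icc.1 hj
    rw [correctionAF_apply_prime_pow hℓ hp (by omega), Nat.pow_div hji hp.pos,
      kronAF_apply (pow_ne_zero _ hp.ne_zero), kron_prime_pow d hp, Int.cast_pow, ite_mul,
      zero_mul]
  have hIcc : (Icc 1 i).filter (· ≤ v) = Icc 1 (min i v) := by
    ext j
    simp only [mem_filter, mem_Icc, le_min_iff]
    omega
  rw [kronGcdAF_apply_prime_pow hℓ hp, mul_apply, Nat.sum_divisorsAntidiagonal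
    (f := fun x y => correctionAF d ℓ x * kronAF d y), Nat.sum_divisors_prime_pow hp,
    sum_range_succ_eq_add_sum_Icc, sum_congr rfl hterm, ← sum_filter, hIcc,
    pow_sub_eq_pow_add_one_sub_mul_sum χ (min_le_left i v), mul_sum]
  simp [(isMultiplicative_correctionAF d ℓ).map_one, kronAF_apply (pow_ne_zero i hp.ne_zero),
    kron_prime_pow d hp, χ]

lemma LSeries_correctionAF (hℓ : ℓ ≠ 0) (s : ℂ) :
    LSeries (correctionAF d ℓ ·) s =
      ∏ p ∈ ℓ.primeFactors, (1 + (1 - (kron d p : ℂ)) *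
        ∑ j ∈ Icc 1 (ℓ.factorization p), (p : ℂ) ^ (-(j : ℂ) * s)) := by
  have hterm (n : ℕ) (hn : n ∈ ℓ.divisors) :
      LSeries.term (correctionAF d ℓ ·) s n = (correctionAF d ℓ).pmul (cpowNeg s) n := by
    have hn0 : n ≠ 0 := Nat.ne_of_gt (Nat.pos_of_mem_divisors hn)
    rw [LSeries.term_of_ne_zero hn0, pmul_apply, cpowNeg_apply s hn0, Complex.cpow_neg,
      div_eq_mul_inv]
  rw [LSeries, tsum_eq_sum fun n => term_correctionAF_eq_zero hℓ s, sum_congr rfl hterm,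
    ((isMultiplicative_correctionAF d ℓ).pmul (isMultiplicative_cpowNeg s)).sum_divisors_eq_prod hℓ]
  refine prod_congr rfl fun p hp => ?_
  have hp := Nat.prime_of_mem_primeFactors hp
  rw [sum_range_succ_eq_add_sum_Icc, mul_sum]
  congr 1
  · simp [(isMultiplicative_correctionAF d ℓ).map_one, (isMultiplicative_cpowNeg s).map_one]
  · refine sum_congr rfl fun j hj => ?_
    obtain ⟨hj1, hjv⟩ := mem_Icc.1 hj
    rw [pmul_apply, correctionAF_apply_prime_pow hℓ hp (by omega), if_pos hjv,
      cpowNeg_apply_prime_pow s hp.ne_zero]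

end Kronecker

theorem stmt0_general (d : ℤ) (ℓ : ℕ) (hℓ : 0 < ℓ)
    (s : ℂ) (hs : 1 < s.re) :
    ∑' n : ℕ, (kron d ((n + 1) / Nat.gcd (n + 1) ℓ) : ℂ) / ((n : ℂ) + 1) ^ s =
      (∑' n : ℕ, (kron d (n + 1) : ℂ) / ((n : ℂ) + 1) ^ s) *
        ∏ p ∈ ℓ.primeFactors,
          (1 + (1 - (kron d p : ℂ)) *
            ∑ j ∈ Finset.Icc 1 (ℓ.factorization p), (p : ℂ) ^ (-(j : ℂ) * s)) := by
  have hℓ0 : ℓ ≠ 0 := hℓ.ne'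
  have hψD : LSeriesSummable (kronGcdAF d ℓ ·) s :=
    LSeriesSummable_of_bounded_of_one_lt_re
      (fun n hn => by rw [kronGcdAF_apply hn]; exact norm_kron_le_one d _) hs
  have hψd : LSeriesSummable (kronAF d ·) s :=
    LSeriesSummable_of_bounded_of_one_lt_re
      (fun n hn => by rw [kronAF_apply hn]; exact norm_kron_le_one d n) hs
  have hG : LSeriesSummable (correctionAF d ℓ ·) s :=
    summable_of_ne_finset_zero fun n => term_correctionAF_eq_zero hℓ0 s
  calc _ = LSeries (kronGcdAF d ℓ ·) s := by
        simp [LSeries_eq_tsum_succ hψD, kronGcdAF_apply]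
    _ = LSeries (kronAF d ·) s * LSeries (correctionAF d ℓ ·) s := by
        rw [kronGcdAF_eq_correctionAF_mul_kronAF d hℓ0, LSeries_mul' hG hψd, mul_comm]
    _ = _ := by
        simp [LSeries_eq_tsum_succ hψd, kronAF_apply, LSeries_correctionAF d hℓ0]

/-- For a nonzero discriminant `D = d ℓ²` (`d` fundamental, `ℓ > 0`) and `Re s > 1`,
`L(s, ψ_D) = L(s, ψ_d) ∏_{p ∣ ℓ} [1 + (1 - ψ_d(p)) ∑_{j=1}^{ord_p ℓ} p^{-js}]`,
where `ψ_D(n) = (d / (n / gcd(n, ℓ)))`. -/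
theorem stmt0 (D d : ℤ) (ℓ : ℕ) (hD0 : D ≠ 0) (hdisc : D % 4 = 0 ∨ D % 4 = 1)
    (hd : IsFundamentalDiscriminant d) (hℓ : 0 < ℓ) (hfac : D = d * (ℓ : ℤ) ^ 2)
    (s : ℂ) (hs : 1 < s.re) :
    ∑' n : ℕ, (kron d ((n + 1) / Nat.gcd (n + 1) ℓ) : ℂ) / ((n : ℂ) + 1) ^ s =
      (∑' n : ℕ, (kron d (n + 1) : ℂ) / ((n : ℂ) + 1) ^ s) *
        ∏ p ∈ ℓ.primeFactors,
          (1 + (1 - (kron d p : ℂ)) *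
            ∑ j ∈ Finset.Icc 1 (ℓ.factorization p), (p : ℂ) ^ (-(j : ℂ) * s)) :=
  stmt0_general d ℓ hℓ s hs
end

section
/- Define r(n) = (1/2)·#{(x,y) ∈ ℤ² : n = x² + 4y²} for n ≥ 1. Then r is a multiplicative arithmetic function. -/
/-! Representations `n = x² + 4y²` are the Gaussian integers `x + 2yi` of norm `n` with even
imaginary part. For odd `n` they make up half of all Gaussian integers of norm `n`, for `n = 4k`
they are the `2w` with `w` of norm `k`, and for `n ≡ 2 mod 4` there are none. So `r` is
controlled by the number of Gaussian integers of a given norm, and that number is multiplicative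
up to the factor 4: as `ℤ[i]` is a UFD, an element of norm `mn` with `m, n` coprime factors into
elements of norms `m` and `n`, uniquely up to the four units. -/

/-- `r n = (1/2) · #{(x, y) ∈ ℤ² : n = x² + 4y²}`. -/
noncomputable def r (n : ℕ) : ℝ :=
  (Set.ncard {p : ℤ × ℤ | (n : ℤ) = p.1 ^ 2 + 4 * p.2 ^ 2} : ℝ) / 2

theorem Int.eq_of_mul_eq_mul_of_dvd_sq {x y m n : ℤ} (hx : 0 ≤ x) (hm : 0 ≤ m)
    (hmn : IsCoprime m n) (hxy : x * y = m * n) (hxm : x ∣ m ^ 2) (hyn : y ∣ n ^ 2) : x = m :=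
  Int.dvd_antisymm hx hm
    ((hmn.pow_left.of_isCoprime_of_dvd_left hxm).dvd_of_dvd_mul_right ⟨y, hxy.symm⟩)
    ((hmn.pow_right.of_isCoprime_of_dvd_right hyn).dvd_of_dvd_mul_right ⟨n, hxy⟩)

namespace Zsqrtd

variable {d : ℤ}

theorem mul_star_eq_one_of_norm_eq_one {z : ℤ√d} (h : z.norm = 1) : z * star z = 1 := by
  rw [← norm_eq_mul_conj, h, Int.cast_one]

theorem isCoprime_of_isCoprime_norm {z w : ℤ√d} (h : IsCoprime z.norm w.norm) :
    IsCoprime z w := by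
  obtain ⟨u, v, huv⟩ := h
  refine ⟨u * star z, v * star w, ?_⟩
  have := congrArg (Int.cast : ℤ → ℤ√d) huv
  push_cast [norm_eq_mul_conj] at this
  linear_combination this

end Zsqrtd

def gaussianNormSet (n : ℤ) : Set GaussianInt := {z | z.norm = n}

def sqAddFourSqReps (n : ℤ) : Set (ℤ × ℤ) := {p | n = p.1 ^ 2 + 4 * p.2 ^ 2}

theorem mem_gaussianNormSet {n : ℤ} {z : GaussianInt} :
    z ∈ gaussianNormSet n ↔ z.norm = n := Iff.rfl

theorem mem_gaussianNormSet_iff_sq_add_sq {n : ℤ} {z : GaussianInt} :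
    z ∈ gaussianNormSet n ↔ z.re ^ 2 + z.im ^ 2 = n := by
  rw [mem_gaussianNormSet, Zsqrtd.norm_def]; ring_nf

theorem mem_sqAddFourSqReps {n : ℤ} {p : ℤ × ℤ} :
    p ∈ sqAddFourSqReps n ↔ n = p.1 ^ 2 + 4 * p.2 ^ 2 := Iff.rfl

/-- For odd `n = norm z` exactly one of `re z`, `im z` is even; the flag records which. -/
theorem ncard_gaussianNormSet_of_odd {n : ℤ} (hn : Odd n) :
    (gaussianNormSet n).ncard = (sqAddFourSqReps n).ncard * 2 := by
  rw [← show (Set.univ : Set Bool).ncard = 2 by simp, ← Set.ncard_prod]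
  symm
  refine Set.ncard_congr
    (fun q _ => bif q.2 then (⟨2 * q.1.2, q.1.1⟩ : GaussianInt) else ⟨q.1.1, 2 * q.1.2⟩)
    ?_ ?_ ?_
  · rintro ⟨⟨x, y⟩, _ | _⟩ ⟨h, -⟩ <;>
      (rw [mem_gaussianNormSet_iff_sq_add_sq]; simp only [cond]; rw [h]; ring)
  · have hx : ∀ x y : ℤ, n = x ^ 2 + 4 * y ^ 2 → ¬ Even x := by
      rintro x y rfl ⟨k, rfl⟩
      exact Int.not_even_iff_odd.2 hn ⟨2 * k ^ 2 + 2 * y ^ 2, by ring⟩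
    rintro ⟨⟨x, y⟩, _ | _⟩ ⟨⟨x', y'⟩, _ | _⟩ ⟨h, -⟩ ⟨h', -⟩ he <;>
      simp only [cond, Zsqrtd.mk.injEq] at he
    all_goals first
      | exact (hx x y h ⟨y', by omega⟩).elim
      | (simp only [Prod.mk.injEq, and_true]; omega)
  · intro z hz
    rw [mem_gaussianNormSet_iff_sq_add_sq] at hz
    by_cases him : Even z.im
    · obtain ⟨k, hk⟩ := him
      refine ⟨((z.re, k), false), ⟨?_, trivial⟩, by ext <;> simp [hk]; ring⟩
      rw [mem_sqAddFourSqReps, ← hz, hk]; ring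
    · have hre : Even z.re := by
        by_contra hre
        refine Int.not_even_iff_odd.2 hn ?_
        rw [← hz]
        simp [Int.even_add, Int.even_pow, hre, him]
      obtain ⟨k, hk⟩ := hre
      refine ⟨((z.im, k), true), ⟨?_, trivial⟩, by ext <;> simp [hk]; ring⟩
      rw [mem_sqAddFourSqReps, ← hz, hk]; ring

theorem ncard_sqAddFourSqReps_four_mul (k : ℤ) :
    (sqAddFourSqReps (4 * k)).ncard = (gaussianNormSet k).ncard := by
  symm
  refine Set.ncard_congr (fun z _ => (2 * z.re, z.im)) ?_ ?_ ?_
  · intro z hz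
    rw [mem_gaussianNormSet_iff_sq_add_sq] at hz
    rw [mem_sqAddFourSqReps, ← hz]; ring
  · intro z w _ _ h
    simp only [Prod.mk.injEq] at h
    ext <;> omega
  · rintro ⟨x, y⟩ h
    rw [mem_sqAddFourSqReps] at h
    have hx : Even x := by
      have : Even (x ^ 2 + 4 * y ^ 2) := h ▸ ⟨2 * k, by ring⟩
      simpa [Int.even_add, Int.even_pow, Int.even_mul, show Even (4 : ℤ) from ⟨2, rfl⟩] using this
    obtain ⟨j, rfl⟩ := hx
    refine ⟨⟨j, y⟩, ?_, by dsimp only; rw [two_mul]⟩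
    rw [mem_gaussianNormSet_iff_sq_add_sq]
    linarith

theorem sqAddFourSqReps_eq_empty_of_emod_four_eq_two {n : ℤ} (hn : n % 4 = 2) :
    sqAddFourSqReps n = ∅ := by
  refine Set.eq_empty_of_forall_notMem fun ⟨x, y⟩ h => ?_
  rw [mem_sqAddFourSqReps] at h
  rcases Int.even_or_odd' x with ⟨k, rfl | rfl⟩
  · have : n = 4 * (k ^ 2 + y ^ 2) := by rw [h]; ring
    omega
  · have : n = 4 * (k ^ 2 + k + y ^ 2) + 1 := by rw [h]; ring
    omega

theorem sqAddFourSqReps_one : sqAddFourSqReps 1 = {(1, 0), (-1, 0)} := by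
  ext ⟨x, y⟩
  simp only [mem_sqAddFourSqReps, Set.mem_insert_iff, Set.mem_singleton_iff, Prod.mk.injEq]
  constructor
  · intro h
    have hy : y = 0 := by nlinarith [sq_nonneg x, sq_nonneg y]
    subst hy
    have : (x - 1) * (x + 1) = 0 := by linear_combination -h
    rcases mul_eq_zero.1 this with h' | h' <;> omega
  · rintro (⟨rfl, rfl⟩ | ⟨rfl, rfl⟩) <;> norm_num

theorem ncard_sqAddFourSqReps_one : (sqAddFourSqReps 1).ncard = 2 := by
  rw [sqAddFourSqReps_one, Set.ncard_pair (by decide)]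

theorem ncard_gaussianNormSet_one : (gaussianNormSet 1).ncard = 4 := by
  rw [ncard_gaussianNormSet_of_odd odd_one, ncard_sqAddFourSqReps_one]

namespace GaussianInt

open Zsqrtd

theorem exists_mul_eq_of_norm_eq_mul {z : GaussianInt} {m n : ℤ} (hm : 0 ≤ m) (hn : 0 ≤ n)
    (hmn : IsCoprime m n) (hz : z.norm = m * n) :
    ∃ a b : GaussianInt, a.norm = m ∧ b.norm = n ∧ a * b = z := by
  have hdvd : z ∣ (m : GaussianInt) * n :=
    ⟨star z, by rw [← norm_eq_mul_conj, hz, Int.cast_mul]⟩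
  obtain ⟨a, b, ha, hb, rfl⟩ := exists_dvd_and_dvd_of_dvd_mul hdvd
  have hab : a.norm * b.norm = m * n := by rw [← norm_mul, hz]
  have ha' : a.norm ∣ m ^ 2 := by
    rw [sq, ← norm_intCast]; exact map_dvd normMonoidHom ha
  have hb' : b.norm ∣ n ^ 2 := by
    rw [sq, ← norm_intCast]; exact map_dvd normMonoidHom hb
  exact ⟨a, b, Int.eq_of_mul_eq_mul_of_dvd_sq (norm_nonneg a) hm hmn hab ha' hb',
    Int.eq_of_mul_eq_mul_of_dvd_sq (norm_nonneg b) hn hmn.symm (by rw [mul_comm, hab, mul_comm])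
      hb' ha', rfl⟩

theorem associated_of_mul_eq_mul {a b a' b' : GaussianInt} (hab' : IsCoprime a.norm b'.norm)
    (ha'b : IsCoprime a'.norm b.norm) (h : a * b = a' * b') : Associated a a' :=
  associated_of_dvd_dvd
    ((isCoprime_of_isCoprime_norm hab').dvd_of_dvd_mul_right ⟨b, h.symm⟩)
    ((isCoprime_of_isCoprime_norm ha'b).dvd_of_dvd_mul_right ⟨b', h⟩)

/-- Fixing one factorisation `z = a z * b z` for each `z` of norm `m * n`, every other one is
`(u * a z) * (star u * b z)` for a unique unit `u`, and there are four units. -/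
theorem four_mul_ncard_gaussianNormSet_mul {m n : ℤ} (hm : 0 < m) (hn : 0 ≤ n)
    (hmn : IsCoprime m n) :
    4 * (gaussianNormSet (m * n)).ncard =
      (gaussianNormSet m).ncard * (gaussianNormSet n).ncard := by
  have hfac (z) (hz : z ∈ gaussianNormSet (m * n)) := exists_mul_eq_of_norm_eq_mul hm.le hn hmn hz
  choose a b ha hb hab using hfac
  have ha₀ (z hz) : a z hz ≠ 0 := fun h₀ => hm.ne' (by rw [← ha z hz, h₀, norm_zero])
  rw [← ncard_gaussianNormSet_one, ← Set.ncard_prod, ← Set.ncard_prod]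
  refine Set.ncard_congr (fun q hq => (q.1 * a q.2 hq.2, star q.1 * b q.2 hq.2)) ?_ ?_ ?_
  · rintro ⟨u, z⟩ ⟨hu, hz⟩
    rw [mem_gaussianNormSet] at hu
    exact ⟨by rw [mem_gaussianNormSet, norm_mul, hu, ha, one_mul],
      by rw [mem_gaussianNormSet, norm_mul, norm_conj, hu, hb, one_mul]⟩
  · rintro ⟨u, z⟩ ⟨u', z'⟩ ⟨hu, hz⟩ ⟨hu', hz'⟩ h
    obtain ⟨h₁, h₂⟩ := Prod.mk.inj h
    have hzz' : z = z' := by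
      calc z = u * star u * (a z hz * b z hz) := by
              rw [mul_star_eq_one_of_norm_eq_one hu, one_mul, hab]
        _ = (u' * a z' hz') * (star u' * b z' hz') := by rw [← h₁, ← h₂]; ring
        _ = z' := by
              rw [mul_mul_mul_comm, mul_star_eq_one_of_norm_eq_one hu', one_mul, hab]
    subst hzz'
    exact Prod.ext (mul_right_cancel₀ (ha₀ z hz) h₁) rfl
  · rintro ⟨x, y⟩ ⟨hx, hy⟩
    rw [mem_gaussianNormSet] at hx hy
    have hz : x * y ∈ gaussianNormSet (m * n) := by
      rw [mem_gaussianNormSet, norm_mul, hx, hy]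
    obtain ⟨v, hv⟩ := associated_of_mul_eq_mul (by rwa [ha, hy]) (by rwa [hx, hb]) (hab _ hz)
    have hv₁ : (v : GaussianInt).norm = 1 := (norm_eq_one_iff' (by norm_num) _).2 v.isUnit
    have hby : b _ hz = v * y := by
      refine mul_left_cancel₀ (ha₀ _ hz) ?_
      rw [hab, ← mul_assoc, hv]
    refine ⟨(v, x * y), ⟨hv₁, hz⟩, Prod.ext ((mul_comm _ _).trans hv) ?_⟩
    change star (v : GaussianInt) * b _ hz = y
    rw [hby, ← mul_assoc, mul_comm (star _), mul_star_eq_one_of_norm_eq_one hv₁, one_mul]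

end GaussianInt

theorem r_eq_ncard_sqAddFourSqReps (n : ℕ) : r n = (sqAddFourSqReps n).ncard / 2 := rfl

theorem r_eq_of_odd {n : ℕ} (hn : Odd n) : r n = (gaussianNormSet n).ncard / 4 := by
  rw [r_eq_ncard_sqAddFourSqReps, ncard_gaussianNormSet_of_odd (by exact_mod_cast hn)]
  push_cast; ring

theorem r_four_mul (k : ℕ) : r (4 * k) = (gaussianNormSet k).ncard / 2 := by
  rw [r_eq_ncard_sqAddFourSqReps, Nat.cast_mul, Nat.cast_ofNat, ncard_sqAddFourSqReps_four_mul]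

theorem r_eq_zero_of_mod_four_eq_two {n : ℕ} (hn : n % 4 = 2) : r n = 0 := by
  rw [r_eq_ncard_sqAddFourSqReps, sqAddFourSqReps_eq_empty_of_emod_four_eq_two (by omega)]
  simp

theorem r_one : r 1 = 1 := by
  rw [r_eq_ncard_sqAddFourSqReps, Nat.cast_one, ncard_sqAddFourSqReps_one]
  norm_num

theorem r_mul_of_odd_left {m n : ℕ} (hm : Odd m) (hmn : m.Coprime n) :
    r (m * n) = r m * r n := by
  have hcount {k : ℕ} (hk : m.Coprime k) :
      ((gaussianNormSet ↑(m * k)).ncard : ℝ) =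
        (gaussianNormSet m).ncard * (gaussianNormSet k).ncard / 4 := by
    rw [Nat.cast_mul, eq_div_iff four_ne_zero, mul_comm]
    exact_mod_cast GaussianInt.four_mul_ncard_gaussianNormSet_mul (by exact_mod_cast hm.pos)
      k.cast_nonneg (Nat.isCoprime_iff_coprime.2 hk)
  rcases Nat.even_or_odd n with hn | hn
  · obtain ⟨k, rfl⟩ | hn4 : (∃ k, n = 4 * k) ∨ n % 4 = 2 := by
      have := Nat.even_iff.1 hn
      by_cases h4 : n % 4 = 0
      · exact .inl ⟨n / 4, by omega⟩
      · exact .inr (by omega)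
    · rw [mul_left_comm, r_four_mul, r_four_mul, r_eq_of_odd hm,
        hcount (Nat.Coprime.coprime_dvd_right (dvd_mul_left k 4) hmn)]
      ring
    · have hmn4 : m * n % 4 = 2 := by
        rw [Nat.mul_mod, hn4]; have := Nat.odd_iff.1 hm; omega
      rw [r_eq_zero_of_mod_four_eq_two hn4, r_eq_zero_of_mod_four_eq_two hmn4, mul_zero]
  · rw [r_eq_of_odd hm, r_eq_of_odd hn, r_eq_of_odd (hm.mul hn), hcount hmn]
    ring

/-- `r` is multiplicative: `r 1 = 1` and `r (m n) = r m · r n` for coprime `m, n ≥ 1`. -/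
theorem stmt2 :
    r 1 = 1 ∧
      ∀ m n : ℕ, 0 < m → 0 < n → Nat.Coprime m n → r (m * n) = r m * r n := by
  refine ⟨r_one, fun m n _ _ hmn => ?_⟩
  rcases Nat.even_or_odd m with hm | hm
  · have hn : Odd n := (Nat.Coprime.coprime_dvd_left hm.two_dvd hmn).odd_of_left
    rw [mul_comm, r_mul_of_odd_left hn hmn.symm, mul_comm]
  · exact r_mul_of_odd_left hm hmn
end

section
/- For positive integers M and ℓ, r^{(M)}(ℓ²) = #{(a,n) ∈ ℤ_{>0}² : a | n², gcd(n,M) = 1, a + n²/a = ℓ} + δ, where δ = 1 if M = 1 and δ = 0 if M > 1, and r^{(M)}(k) = (1/2)·#{(x,y) ∈ ℤ² : k = x² + 4y², gcd(y,M) = 1}. -/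
/-- `r^{(M)}(k) = (1/2) · #{(x, y) ∈ ℤ² : k = x² + 4y², gcd(y, M) = 1}`. -/
noncomputable def rM (M k : ℕ) : ℚ :=
  (Set.ncard {p : ℤ × ℤ | (k : ℤ) = p.1 ^ 2 + 4 * p.2 ^ 2 ∧ Int.gcd p.2 M = 1} : ℚ) / 2

/-!
Writing `ℓ² = x² + 4y²` as `(ℓ - x)(ℓ + x) = 4y²` forces `ℓ - x = 2a` to be even, and then
the equation becomes `y² = a (ℓ - a)`, i.e. `a ∣ y²` and `a + y²/a = ℓ`. Hence the solutions with
`y > 0` are the pairs `(a, n)` of the right-hand side, via `(a, n) ↦ (ℓ - 2a, n)`; those with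
`y < 0` are their mirror images, and `y = 0` contributes `(±ℓ, 0)` exactly when `gcd(0, M) = M`
is `1`.
-/

def repSet (M k : ℕ) : Set (ℤ × ℤ) :=
  {p : ℤ × ℤ | (k : ℤ) = p.1 ^ 2 + 4 * p.2 ^ 2 ∧ Int.gcd p.2 M = 1}

def divisorPairs (M ℓ : ℕ) : Set (ℕ × ℕ) :=
  {q : ℕ × ℕ | 0 < q.1 ∧ 0 < q.2 ∧ q.1 ∣ q.2 ^ 2 ∧ Nat.Coprime q.2 M ∧ q.1 + q.2 ^ 2 / q.1 = ℓ}

theorem rM_eq_ncard_repSet_div_two (M k : ℕ) : rM M k = (repSet M k).ncard / 2 := rfl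

theorem repSet_finite (M k : ℕ) : (repSet M k).Finite := by
  refine ((Set.finite_Icc (-(k : ℤ)) k).prod (Set.finite_Icc (-(k : ℤ)) k)).subset ?_
  rintro ⟨x, y⟩ ⟨hk, -⟩
  simp only [Set.mem_prod, Set.mem_Icc]
  refine ⟨⟨?_, ?_⟩, ⟨?_, ?_⟩⟩ <;> nlinarith [Int.le_self_sq x, Int.le_self_sq (-x),
    Int.le_self_sq y, Int.le_self_sq (-y), sq_nonneg x, sq_nonneg y]

theorem mk_neg_snd_mem_repSet {M k : ℕ} {p : ℤ × ℤ} (hp : p ∈ repSet M k) :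
    (p.1, -p.2) ∈ repSet M k := by
  obtain ⟨hk, hgcd⟩ := hp
  exact ⟨by rw [hk, neg_sq], by simpa using hgcd⟩

theorem ncard_eq_ncard_sep_snd_eq_zero_add_two_mul {s : Set (ℤ × ℤ)} (hs : s.Finite)
    (hneg : ∀ p ∈ s, (p.1, -p.2) ∈ s) :
    s.ncard = {p ∈ s | p.2 = 0}.ncard + 2 * {p ∈ s | 0 < p.2}.ncard := by
  set g : ℤ × ℤ → ℤ × ℤ := fun p => (p.1, -p.2)
  have hg : Function.Involutive g := fun p => by simp [g]
  have hmirror : {p ∈ s | p.2 < 0} = g '' {p ∈ s | 0 < p.2} := by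
    rw [Set.image_eq_preimage_of_inverse hg.leftInverse hg.rightInverse]
    ext p
    refine ⟨fun ⟨hp, hlt⟩ => ⟨hneg p hp, neg_pos.2 hlt⟩, fun ⟨hp, hlt⟩ => ⟨?_, neg_pos.1 hlt⟩⟩
    simpa [g] using hneg _ hp
  have hsplit : s = {p ∈ s | p.2 = 0} ∪ ({p ∈ s | 0 < p.2} ∪ {p ∈ s | p.2 < 0}) := by
    ext p
    rcases lt_trichotomy p.2 0 with h | h | h
    · simp [h, h.ne, not_lt_of_gt h]
    · simp [h]
    · simp [h, h.ne', not_lt_of_gt h]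
  have hfin (q : ℤ × ℤ → Prop) : {p ∈ s | q p}.Finite := hs.subset (Set.sep_subset _ _)
  have hdisj (q r : ℤ × ℤ → Prop) (hqr : ∀ p, q p → ¬ r p) :
      Disjoint {p ∈ s | q p} {p ∈ s | r p} :=
    Set.disjoint_left.2 fun p hq hr => hqr p hq.2 hr.2
  calc s.ncard
      = {p ∈ s | p.2 = 0}.ncard + ({p ∈ s | 0 < p.2}.ncard + {p ∈ s | p.2 < 0}.ncard) := by
        conv_lhs => rw [hsplit]
        rw [Set.ncard_union_eq (Set.disjoint_union_right.2
            ⟨hdisj _ _ fun p h h' => h'.ne' h, hdisj _ _ fun p h h' => h'.ne h⟩)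
            (hfin _) ((hfin _).union (hfin _)),
          Set.ncard_union_eq (hdisj _ _ fun p h h' => h.not_gt h') (hfin _) (hfin _)]
    _ = {p ∈ s | p.2 = 0}.ncard + 2 * {p ∈ s | 0 < p.2}.ncard := by
        rw [hmirror, Set.ncard_image_of_injective _ hg.injective, two_mul]

theorem ncard_repSet_sep_snd_eq_zero (M : ℕ) {ℓ : ℕ} (hℓ : 0 < ℓ) :
    {p ∈ repSet M (ℓ ^ 2) | p.2 = 0}.ncard = if M = 1 then 2 else 0 := by
  split_ifs with hM
  · rw [show {p ∈ repSet M (ℓ ^ 2) | p.2 = 0} = {((ℓ : ℤ), 0), (-(ℓ : ℤ), 0)} by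
      ext ⟨x, y⟩
      simp only [repSet, hM]
      by_cases hy : y = 0 <;> simp [hy, eq_comm (a := (ℓ : ℤ) ^ 2), sq_eq_sq_iff_eq_or_eq_neg]]
    exact Set.ncard_pair (by simp; omega)
  · rw [Set.ncard_eq_zero ((repSet_finite M _).subset (Set.sep_subset _ _))]
    ext ⟨x, y⟩
    simp only [repSet]
    by_cases hy : y = 0 <;> simp [hy, hM]

theorem sq_eq_sq_add_four_mul_sq_iff (ℓ x y : ℤ) :
    ℓ ^ 2 = x ^ 2 + 4 * y ^ 2 ↔ ∃ b, x = ℓ - 2 * b ∧ y ^ 2 + b ^ 2 = b * ℓ := by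
  constructor
  · intro h
    have heven : Even (ℓ - x) := by
      have h2 : Even (ℓ ^ 2 - x ^ 2) := ⟨2 * y ^ 2, by linear_combination h⟩
      simpa [Int.even_sub, parity_simps] using h2
    obtain ⟨b, hb⟩ := heven
    obtain rfl : x = ℓ - 2 * b := by linarith
    exact ⟨b, rfl, by linarith⟩
  · rintro ⟨b, rfl, h⟩
    linear_combination (-4) * h

theorem dvd_sq_and_add_sq_div_eq_iff {a n ℓ : ℕ} (ha : 0 < a) :
    a ∣ n ^ 2 ∧ a + n ^ 2 / a = ℓ ↔ (n : ℤ) ^ 2 + a ^ 2 = a * ℓ := by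
  constructor
  · rintro ⟨⟨c, hc⟩, hsum⟩
    rw [hc, Nat.mul_div_cancel_left _ ha] at hsum
    have hc' : (n : ℤ) ^ 2 = a * c := by exact_mod_cast hc
    push_cast [← hsum]
    linear_combination hc'
  · intro h
    have hle : a ≤ ℓ := by
      have : (a : ℤ) ≤ ℓ := by nlinarith
      exact_mod_cast this
    have hn : n ^ 2 = a * (ℓ - a) := by
      have : ((n ^ 2 : ℕ) : ℤ) = ((a * (ℓ - a) : ℕ) : ℤ) := by push_cast [hle]; linarith
      exact_mod_cast this
    exact ⟨⟨ℓ - a, hn⟩, by rw [hn, Nat.mul_div_cancel_left _ ha]; omega⟩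

theorem image_divisorPairs (M ℓ : ℕ) :
    (fun q : ℕ × ℕ => ((ℓ : ℤ) - 2 * q.1, (q.2 : ℤ))) '' divisorPairs M ℓ =
      {p ∈ repSet M (ℓ ^ 2) | 0 < p.2} := by
  ext ⟨x, y⟩
  simp only [repSet, divisorPairs, Set.mem_image, Set.mem_ofPred_eq, Prod.mk.injEq,
    Prod.exists, Nat.cast_pow, sq_eq_sq_add_four_mul_sq_iff]
  constructor
  · rintro ⟨a, n, ⟨ha, hn, hdiv, hcop, hsum⟩, rfl, rfl⟩
    refine ⟨⟨⟨a, rfl, (dvd_sq_and_add_sq_div_eq_iff ha).1 ⟨hdiv, hsum⟩⟩, ?_⟩, by exact_mod_cast hn⟩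
    rwa [Int.gcd_natCast_natCast]
  · rintro ⟨⟨⟨b, rfl, hb⟩, hgcd⟩, hy⟩
    have hb0 : 0 < b := by nlinarith
    lift b to ℕ using hb0.le
    lift y to ℕ using hy.le
    rw [Int.gcd_natCast_natCast] at hgcd
    have hb_pos : 0 < b := by exact_mod_cast hb0
    obtain ⟨hdiv, hsum⟩ := (dvd_sq_and_add_sq_div_eq_iff hb_pos).2 hb
    exact ⟨b, y, ⟨hb_pos, by exact_mod_cast hy, hdiv, hgcd, hsum⟩, rfl, rfl⟩

theorem stmt5_general (M ℓ : ℕ) (hℓ : 0 < ℓ) :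
    rM M (ℓ ^ 2) =
      (Set.ncard {q : ℕ × ℕ | 0 < q.1 ∧ 0 < q.2 ∧ q.1 ∣ q.2 ^ 2 ∧
          Nat.Coprime q.2 M ∧ q.1 + q.2 ^ 2 / q.1 = ℓ} : ℚ) +
        (if M = 1 then 1 else 0) := by
  have hinj : Function.Injective fun q : ℕ × ℕ => ((ℓ : ℤ) - 2 * q.1, (q.2 : ℤ)) := by
    rintro ⟨a, n⟩ ⟨a', n'⟩ h
    simp only [Prod.mk.injEq] at h ⊢
    omega
  change _ = ((divisorPairs M ℓ).ncard : ℚ) + _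
  rw [rM_eq_ncard_repSet_div_two, ncard_eq_ncard_sep_snd_eq_zero_add_two_mul (repSet_finite M _)
      fun p => mk_neg_snd_mem_repSet, ncard_repSet_sep_snd_eq_zero M hℓ, ← image_divisorPairs,
    Set.ncard_image_of_injective _ hinj]
  split_ifs <;> push_cast <;> ring

/-- For positive integers `M, ℓ`:
`r^{(M)}(ℓ²) = #{(a, n) ∈ ℤ_{>0}² : a ∣ n², gcd(n, M) = 1, a + n²/a = ℓ} + δ_{M=1}`. -/
theorem stmt5 (M ℓ : ℕ) (hM : 0 < M) (hℓ : 0 < ℓ) :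
    rM M (ℓ ^ 2) =
      (Set.ncard {q : ℕ × ℕ | 0 < q.1 ∧ 0 < q.2 ∧ q.1 ∣ q.2 ^ 2 ∧
          Nat.Coprime q.2 M ∧ q.1 + q.2 ^ 2 / q.1 = ℓ} : ℚ) +
        (if M = 1 then 1 else 0) :=
  stmt5_general M ℓ hℓ
end

section
/- Let M be a squarefree positive integer, p a prime dividing M, and D a positive integer with D ≡ 0 or 1 (mod 4). Let d be the discriminant of ℚ(√D) (i.e., D = dℓ² with d fundamental). If the Kronecker symbol (d/p) ≠ 1, then ∑_{k=0}^∞ r^{(M)}(D p^{-2k}) = r^{(M/p)}(D). -/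
/-! Multiplication by `p^k` identifies the representations `D / p^{2k} = x² + 4y²` with
`gcd(y, M) = 1` with the representations `D = x² + 4y²` with `gcd(y, M/p) = 1` and `v_p(y) = k`,
provided every representation of `D` has `v_p(y) ≤ v_p(x)`. This is where `(d/p) ≠ 1` enters:
if `p ∣ y` but `p ∤ x`, then `dℓ² ≡ x²` makes `d` a nonzero square mod `p` (mod `8` when
`p = 2`), so `(d/p) = 1`; and if `p` divides both `x` and `y`, then `p ∣ ℓ` because `d` is
fundamental, and dividing the representation by `p²` lets one descend. -/

theorem kronP_two_eq_one_of_mul_sq_eq {d ℓ x y : ℤ} (h : d * ℓ ^ 2 = x ^ 2 + 4 * y ^ 2)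
    (hx : Odd x) (hy : Even y) : kronP d 2 = 1 := by
  obtain ⟨t, rfl⟩ := hx
  obtain ⟨b, rfl⟩ := hy
  have h8 : (d : ZMod 8) * (ℓ : ZMod 8) ^ 2 = (2 * t + 1) ^ 2 := by
    have h80 : (8 : ZMod 8) = 0 := by decide
    have := congrArg (Int.cast : ℤ → ZMod 8) h
    push_cast at this
    linear_combination this + 2 * (b : ZMod 8) ^ 2 * h80
  have hsq : ∀ d' l' t' : ZMod 8, d' * l' ^ 2 = (2 * t' + 1) ^ 2 → d' = 1 := by decide
  have hd8 : d % 8 = 1 := by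
    simpa using (ZMod.intCast_eq_intCast_iff' d 1 8).1 (by simpa using hsq _ _ _ h8)
  simp [kronP, hd8, show d % 2 ≠ 0 by omega]

theorem kronP_eq_one_of_mul_sq_eq_of_ne_two {p : ℕ} (hp : p.Prime) (hp2 : p ≠ 2)
    {d ℓ x y : ℤ} (h : d * ℓ ^ 2 = x ^ 2 + 4 * y ^ 2) (hx : ¬ (p : ℤ) ∣ x) (hy : (p : ℤ) ∣ y) :
    kronP d p = 1 := by
  have := Fact.mk hp
  have hx0 : (x : ZMod p) ≠ 0 := fun h0 => hx ((ZMod.intCast_zmod_eq_zero_iff_dvd x p).1 h0)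
  have hmod : (d : ZMod p) * (ℓ : ZMod p) ^ 2 = (x : ZMod p) ^ 2 := by
    have := congrArg (Int.cast : ℤ → ZMod p) h
    push_cast at this
    rwa [(ZMod.intCast_zmod_eq_zero_iff_dvd y p).2 hy, zero_pow two_ne_zero, mul_zero,
      add_zero] at this
  have hd0 : (d : ZMod p) ≠ 0 := by
    rintro h0
    rw [h0, zero_mul] at hmod
    exact hx0 (pow_eq_zero_iff two_ne_zero |>.1 hmod.symm)
  have hℓ0 : (ℓ : ZMod p) ≠ 0 := by
    rintro h0
    rw [h0, zero_pow two_ne_zero, mul_zero] at hmod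
    exact hx0 (pow_eq_zero_iff two_ne_zero |>.1 hmod.symm)
  rw [kronP, if_neg hp2, ← jacobiSym.legendreSym.to_jacobiSym, legendreSym.eq_one_iff p hd0]
  refine ⟨x / ℓ, ?_⟩
  field_simp
  linear_combination hmod

theorem dvd_of_dvd_of_kronP_ne_one {p : ℕ} (hp : p.Prime) {d ℓ x y : ℤ} (hdp : kronP d p ≠ 1)
    (h : d * ℓ ^ 2 = x ^ 2 + 4 * y ^ 2) (hy : (p : ℤ) ∣ y) : (p : ℤ) ∣ x := by
  by_contra hx
  rcases eq_or_ne p 2 with rfl | hp2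
  · push_cast at hx hy
    exact hdp (kronP_two_eq_one_of_mul_sq_eq h (Int.not_even_iff_odd.1 (by rwa [even_iff_two_dvd]))
      (even_iff_two_dvd.2 hy))
  · exact hdp (kronP_eq_one_of_mul_sq_eq_of_ne_two hp hp2 h hx hy)

theorem IsFundamentalDiscriminant.eq_two_of_sq_dvd {d : ℤ} (hd : IsFundamentalDiscriminant d)
    {p : ℕ} (hp : p.Prime) (hpd : (p : ℤ) ^ 2 ∣ d) : p = 2 := by
  by_contra hp2
  have hpz : Prime (p : ℤ) := Nat.prime_iff_prime_int.mp hp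
  rcases hd with ⟨-, hsf⟩ | ⟨hd4, hsf, -⟩
  · exact hpz.not_isUnit (hsf _ (by rwa [← sq]))
  · have hp4 : ¬ (p : ℤ) ∣ 2 ^ 2 := fun h =>
      hp2 ((Nat.prime_dvd_prime_iff_eq hp Nat.prime_two).1
        (Int.natCast_dvd_natCast.1 (hpz.dvd_of_dvd_pow h)))
    have hcop : IsCoprime ((p : ℤ) ^ 2) (2 ^ 2) := ((hpz.coprime_iff_not_dvd).2 hp4).pow_left
    have : (p : ℤ) ^ 2 ∣ 2 ^ 2 * (d / 4) := by rwa [show (2 : ℤ) ^ 2 * (d / 4) = d by omega]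
    exact hpz.not_isUnit (hsf _ (by rw [← sq]; exact hcop.dvd_of_dvd_mul_left this))

theorem IsFundamentalDiscriminant.dvd_of_dvd_of_dvd {d : ℤ} (hd : IsFundamentalDiscriminant d)
    {p : ℕ} (hp : p.Prime) {ℓ x y : ℤ} (h : d * ℓ ^ 2 = x ^ 2 + 4 * y ^ 2) (hx : (p : ℤ) ∣ x)
    (hy : (p : ℤ) ∣ y) : (p : ℤ) ∣ ℓ := by
  by_contra hℓ
  obtain ⟨a, rfl⟩ := hx
  obtain ⟨b, rfl⟩ := hy
  have hpz : Prime (p : ℤ) := Nat.prime_iff_prime_int.mp hp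
  have hpd : (p : ℤ) ^ 2 ∣ d :=
    ((hpz.coprime_iff_not_dvd.2 hℓ).pow).dvd_of_dvd_mul_right ⟨a ^ 2 + 4 * b ^ 2, by rw [h]; ring⟩
  obtain rfl := hd.eq_two_of_sq_dvd hp hpd
  rcases hd with ⟨hd1, -⟩ | ⟨-, -, hc⟩
  · omega
  -- `d = 4 c` with `c ≡ 2, 3 (mod 4)`, whereas `c ℓ² ≡ a² (mod 4)` with `ℓ` odd
  obtain ⟨c, rfl⟩ := hpd
  obtain ⟨m, rfl⟩ : Odd ℓ := Int.not_even_iff_odd.1 (by rwa [even_iff_two_dvd])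
  push_cast at h hc
  have h' : c * (2 * m + 1) ^ 2 = a ^ 2 + 4 * b ^ 2 :=
    mul_left_cancel₀ four_ne_zero (by linear_combination h)
  have h4 : (c : ZMod 4) * (2 * m + 1) ^ 2 = (a : ZMod 4) ^ 2 := by
    have h40 : (4 : ZMod 4) = 0 := by decide
    have := congrArg (Int.cast : ℤ → ZMod 4) h'
    push_cast at this
    linear_combination this + (b : ZMod 4) ^ 2 * h40
  have hc4 : (c : ZMod 4) = 2 ∨ (c : ZMod 4) = 3 := by
    rw [show 4 * c / 4 = c by omega] at hc
    rcases hc with hc | hc <;> [left; right] <;> simpa [hc] using (ZMod.intCast_mod c 4).symm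
  have hsq : ∀ c' m' a' : ZMod 4, (c' = 2 ∨ c' = 3) → c' * (2 * m' + 1) ^ 2 ≠ a' ^ 2 := by decide
  exact hsq _ _ _ hc4 h4

theorem IsFundamentalDiscriminant.pow_dvd_of_pow_dvd {d : ℤ} (hd : IsFundamentalDiscriminant d)
    {p : ℕ} (hp : p.Prime) (hdp : kronP d p ≠ 1) (k : ℕ) {ℓ x y : ℤ}
    (h : d * ℓ ^ 2 = x ^ 2 + 4 * y ^ 2) (hy : (p : ℤ) ^ k ∣ y) : (p : ℤ) ^ k ∣ x := by
  induction k generalizing ℓ x y with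
  | zero => simp
  | succ k ih =>
    have hpy : (p : ℤ) ∣ y := (dvd_pow_self _ k.succ_ne_zero).trans hy
    obtain ⟨a, rfl⟩ := dvd_of_dvd_of_kronP_ne_one hp hdp h hpy
    obtain ⟨m, rfl⟩ := hd.dvd_of_dvd_of_dvd hp h (dvd_mul_right _ _) hpy
    obtain ⟨b, rfl⟩ := hpy
    have hp0 : (p : ℤ) ≠ 0 := by exact_mod_cast hp.ne_zero
    have h' : d * m ^ 2 = a ^ 2 + 4 * b ^ 2 :=
      mul_left_cancel₀ (pow_ne_zero 2 hp0) (by linear_combination h)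
    rw [pow_succ'] at hy ⊢
    exact mul_dvd_mul_left _ (ih h' ((mul_dvd_mul_iff_left hp0).1 hy))

theorem padicValInt_pow_mul {p : ℕ} [Fact p.Prime] {b : ℤ} (hb : ¬ (p : ℤ) ∣ b) (k : ℕ) :
    padicValInt p ((p : ℤ) ^ k * b) = k := by
  have hb0 : b ≠ 0 := by rintro rfl; exact hb (dvd_zero _)
  rw [padicValInt.mul (pow_ne_zero _ (by exact_mod_cast (Fact.out : p.Prime).ne_zero)) hb0,
    padicValInt.eq_zero_of_not_dvd hb, ← Nat.cast_pow, padicValInt.of_nat, padicValNat.prime_pow,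
    add_zero]

theorem exists_eq_pow_padicValInt_mul {p : ℕ} [Fact p.Prime] {a : ℤ} (ha : a ≠ 0) :
    ∃ b, a = (p : ℤ) ^ padicValInt p a * b ∧ ¬ (p : ℤ) ∣ b := by
  obtain ⟨b, hb⟩ := padicValInt_dvd (p := p) a
  refine ⟨b, hb, fun ⟨c, hc⟩ => ?_⟩
  have : (p : ℤ) ^ (padicValInt p a + 1) ∣ a := ⟨c, by rw [pow_succ, mul_assoc, ← hc]; exact hb⟩
  rcases (padicValInt_dvd_iff _ a).1 this with h | h
  · exact ha h
  · omega

theorem Set.Finite.tsum_ncard_fiber {α β R : Type*} [AddCommMonoidWithOne R] [TopologicalSpace R]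
    {s : Set α} (hs : s.Finite) (f : α → β) :
    ∑' b, (({a ∈ s | f a = b}.ncard : ℕ) : R) = s.ncard := by
  classical
  have hfiber : ∀ b, {a ∈ s | f a = b}.ncard = (hs.toFinset.filter (f · = b)).card := fun b => by
    rw [← Set.ncard_coe_finset, Finset.coe_filter]; simp only [Set.Finite.mem_toFinset]
  rw [tsum_eq_sum (s := hs.toFinset.image f), Set.ncard_eq_toFinset_card s hs,
    Finset.card_eq_sum_card_image f, Nat.cast_sum]
  · simp only [hfiber]
  · intro b hb
    rw [hfiber, Finset.card_eq_zero.2, Nat.cast_zero]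
    exact Finset.filter_eq_empty_iff.2 fun a ha hab => hb (Finset.mem_image.2 ⟨a, ha, hab⟩)

def reprSet (n M : ℕ) : Set (ℤ × ℤ) :=
  {q | (n : ℤ) = q.1 ^ 2 + 4 * q.2 ^ 2 ∧ Int.gcd q.2 M = 1}

theorem rM_eq_ncard_reprSet (M n : ℕ) : rM M n = (reprSet n M).ncard / 2 := rfl

theorem mem_reprSet {n M : ℕ} {q : ℤ × ℤ} :
    q ∈ reprSet n M ↔ (n : ℤ) = q.1 ^ 2 + 4 * q.2 ^ 2 ∧ IsCoprime q.2 (M : ℤ) := by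
  rw [Int.isCoprime_iff_gcd_eq_one]; rfl

theorem reprSet_finite (n M : ℕ) : (reprSet n M).Finite := by
  refine ((Set.finite_Icc (-(n : ℤ)) n).prod (Set.finite_Icc (-(n : ℤ)) n)).subset ?_
  rintro ⟨x, y⟩ ⟨hn, -⟩
  simp only [Set.mem_prod, Set.mem_Icc]
  refine ⟨⟨?_, ?_⟩, ⟨?_, ?_⟩⟩ <;> nlinarith [sq_nonneg x, sq_nonneg y, sq_nonneg (x - 1),
    sq_nonneg (x + 1), sq_nonneg (y - 1), sq_nonneg (y + 1)]

def PowDvdFstOfPowDvdSnd (p D : ℕ) : Prop :=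
  ∀ (k : ℕ) (x y : ℤ), (D : ℤ) = x ^ 2 + 4 * y ^ 2 → (p : ℤ) ^ k ∣ y → (p : ℤ) ^ k ∣ x

section Scaling

variable {p N : ℕ} [hp : Fact p.Prime]

theorem not_dvd_of_mem_reprSet_mul {n : ℕ} {q : ℤ × ℤ} (hq : q ∈ reprSet n (p * N)) :
    ¬ (p : ℤ) ∣ q.2 := fun h =>
  (Nat.prime_iff_prime_int.mp hp.out).not_isUnit
    ((mem_reprSet.1 hq).2.isUnit_of_dvd' h (by push_cast; exact dvd_mul_right _ _))

theorem smul_mem_reprSet (hpN : ¬ p ∣ N) {n : ℕ} {q : ℤ × ℤ} (hq : q ∈ reprSet n (p * N))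
    (k : ℕ) : (p : ℤ) ^ k • q ∈ reprSet (p ^ (2 * k) * n) N := by
  obtain ⟨hn, hcop⟩ := mem_reprSet.1 hq
  refine mem_reprSet.2 ⟨?_, ?_⟩
  · simp only [Prod.smul_fst, Prod.smul_snd, smul_eq_mul]
    push_cast
    rw [hn]; ring
  · have hpN' : IsCoprime (p : ℤ) N := Nat.Coprime.isCoprime ((hp.out.coprime_iff_not_dvd).2 hpN)
    push_cast at hcop
    exact hpN'.pow_left.mul_left hcop.of_mul_right_right

theorem padicValInt_smul_snd {n : ℕ} {q : ℤ × ℤ} (hq : q ∈ reprSet n (p * N)) (k : ℕ) :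
    padicValInt p ((p : ℤ) ^ k • q).2 = k :=
  padicValInt_pow_mul (not_dvd_of_mem_reprSet_mul hq) k

variable {D : ℕ}

theorem snd_ne_zero_of_mem_reprSet (hpow : PowDvdFstOfPowDvdSnd p D) (hD : D ≠ 0) {q : ℤ × ℤ}
    (hq : q ∈ reprSet D N) : q.2 ≠ 0 := by
  intro h0
  have hDq := (mem_reprSet.1 hq).1
  have hx0 : q.1 = 0 := by
    have := hpow (padicValInt p q.1 + 1) q.1 q.2 hDq (by rw [h0]; exact dvd_zero _)
    rcases (padicValInt_dvd_iff _ q.1).1 this with h | h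
    · exact h
    · omega
  rw [hx0, h0] at hDq
  exact hD (by simpa using hDq)

theorem exists_eq_smul_of_mem_reprSet (hpow : PowDvdFstOfPowDvdSnd p D) (hD : D ≠ 0)
    {q : ℤ × ℤ} (hq : q ∈ reprSet D N) :
    ∃ n, D = p ^ (2 * padicValInt p q.2) * n ∧
      ∃ q' ∈ reprSet n (p * N), q = (p : ℤ) ^ padicValInt p q.2 • q' := by
  obtain ⟨hDq, hcop⟩ := mem_reprSet.1 hq
  set v := padicValInt p q.2
  obtain ⟨b, hb, hpb⟩ :=
    exists_eq_pow_padicValInt_mul (p := p) (snd_ne_zero_of_mem_reprSet hpow hD hq)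
  obtain ⟨a, ha⟩ := hpow v q.1 q.2 hDq (padicValInt_dvd _)
  have hDab : (D : ℤ) = ((p ^ (2 * v) : ℕ) : ℤ) * (a ^ 2 + 4 * b ^ 2) := by
    rw [hDq, ha, hb]; push_cast; ring
  obtain ⟨n, rfl⟩ := Int.natCast_dvd_natCast.1 ⟨_, hDab⟩
  refine ⟨n, rfl, (a, b), mem_reprSet.2 ⟨?_, ?_⟩, Prod.ext ha hb⟩
  · push_cast at hDab
    exact mul_left_cancel₀ (pow_ne_zero _ (by exact_mod_cast hp.out.ne_zero)) hDab
  · have hbp : IsCoprime b p :=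
      ((Nat.prime_iff_prime_int.mp hp.out).coprime_iff_not_dvd.2 hpb).symm
    rw [hb] at hcop
    push_cast
    exact hbp.mul_right hcop.of_mul_left_right

theorem ncard_reprSet_fiber (hpow : PowDvdFstOfPowDvdSnd p D) (hD : D ≠ 0) (hpN : ¬ p ∣ N)
    (k : ℕ) : {q ∈ reprSet D N | padicValInt p q.2 = k}.ncard =
      if p ^ (2 * k) ∣ D then (reprSet (D / p ^ (2 * k)) (p * N)).ncard else 0 := by
  have hpk : 0 < p ^ (2 * k) := pow_pos hp.out.pos _
  split_ifs with hk
  · obtain ⟨n, rfl⟩ := hk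
    rw [Nat.mul_div_cancel_left _ hpk, ← Set.ncard_image_of_injective (reprSet n (p * N))
      (smul_right_injective (ℤ × ℤ) (pow_ne_zero k (Int.natCast_ne_zero.2 hp.out.ne_zero)))]
    congr 1
    ext q
    constructor
    · rintro ⟨hq, rfl⟩
      obtain ⟨n', hn', q', hq', hqq'⟩ := exists_eq_smul_of_mem_reprSet hpow hD hq
      obtain rfl : n' = n := Nat.eq_of_mul_eq_mul_left hpk hn'.symm
      exact ⟨q', hq', hqq'.symm⟩
    · rintro ⟨q', hq', rfl⟩
      exact ⟨smul_mem_reprSet hpN hq' k, padicValInt_smul_snd hq' k⟩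
  · refine (Set.ncard_eq_zero ((reprSet_finite D N).sep _)).2
      (Set.eq_empty_of_forall_notMem fun q ⟨hq, hv⟩ => hk ?_)
    obtain ⟨n, hn, -⟩ := exists_eq_smul_of_mem_reprSet hpow hD hq
    exact hv ▸ ⟨n, hn⟩

theorem tsum_rM_mul_eq_rM (hpow : PowDvdFstOfPowDvdSnd p D) (hD : D ≠ 0) (hpN : ¬ p ∣ N) :
    ∑' k : ℕ, (if p ^ (2 * k) ∣ D then rM (p * N) (D / p ^ (2 * k)) else 0) = rM N D := by
  calc _ = ∑' k : ℕ, (({q ∈ reprSet D N | padicValInt p q.2 = k}.ncard : ℕ) : ℚ) / 2 := by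
        congr! 2 with k
        rw [ncard_reprSet_fiber hpow hD hpN k]
        split_ifs <;> simp [rM_eq_ncard_reprSet]
    _ = rM N D := by
        rw [tsum_div_const, (reprSet_finite D N).tsum_ncard_fiber, rM_eq_ncard_reprSet]

end Scaling

theorem stmt7_general (M p D : ℕ) (d : ℤ) (ℓ : ℕ) (hM : Squarefree M) (hp : p.Prime)
    (hpM : p ∣ M) (hD : 0 < D)
    (hd : IsFundamentalDiscriminant d) (hfac : (D : ℤ) = d * (ℓ : ℤ) ^ 2)
    (hdp : kronP d p ≠ 1) :
    ∑' k : ℕ, (if p ^ (2 * k) ∣ D then rM M (D / p ^ (2 * k)) else 0) =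
      rM (M / p) D := by
  have := Fact.mk hp
  obtain ⟨N, rfl⟩ := hpM
  have hpN : ¬ p ∣ N := fun ⟨c, hc⟩ =>
    hp.one_lt.ne' (Nat.isUnit_iff.1 (hM p ⟨c, by rw [hc, mul_assoc]⟩))
  rw [Nat.mul_div_cancel_left N hp.pos]
  exact tsum_rM_mul_eq_rM (fun k x y h => hd.pow_dvd_of_pow_dvd hp hdp k (hfac.symm.trans h))
    hD.ne' hpN

/-- For `M` squarefree, `p ∣ M` prime, `D = d ℓ²` a positive discriminant with `d`
fundamental, if the Kronecker symbol `(d/p) ≠ 1` then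
`∑_{k≥0} r^{(M)}(D p^{-2k}) = r^{(M/p)}(D)`. -/
theorem stmt7 (M p D : ℕ) (d : ℤ) (ℓ : ℕ) (hM : Squarefree M) (hp : p.Prime)
    (hpM : p ∣ M) (hD : 0 < D) (hdisc : D % 4 = 0 ∨ D % 4 = 1)
    (hd : IsFundamentalDiscriminant d) (hℓ : 0 < ℓ) (hfac : (D : ℤ) = d * (ℓ : ℤ) ^ 2)
    (hdp : kronP d p ≠ 1) :
    ∑' k : ℕ, (if p ^ (2 * k) ∣ D then rM M (D / p ^ (2 * k)) else 0) =
      rM (M / p) D :=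
  stmt7_general M p D d ℓ hM hp hpM hD hd hfac hdp
end

section
/- For Re(s) > 1/2 and r ∈ ℝ, ∫_{-∞}^∞ (2 cosh(u/2))^{-2s} e^{iru} du = B(s + ir, s - ir), where B denotes the Euler Beta function B(a,b) = Γ(a)Γ(b)/Γ(a+b). -/
/-!
Substitute `u = log (t / (1 - t))` with `t ∈ (0, 1)`. Then `du = dt / (t (1 - t))`,
`2 cosh (u / 2) = (t + (1 - t)) / √(t (1 - t)) = (t (1 - t))^{-1/2}` and
`e^{iru} = t^{ir} (1 - t)^{-ir}`, so the integral becomes Euler's Beta integral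
`∫₀¹ t^{s + ir - 1} (1 - t)^{s - ir - 1} dt`.
-/

open Complex MeasureTheory Set

namespace Real

noncomputable def logit (t : ℝ) : ℝ := log t - log (1 - t)

theorem strictMonoOn_logit : StrictMonoOn logit (Ioo 0 1) := by
  intro t ht t' ht' htt'
  have h₁ : log t < log t' := log_lt_log ht.1 htt'
  have h₂ : log (1 - t') < log (1 - t) := log_lt_log (by linarith [ht'.2]) (by linarith)
  unfold logit
  linarith

theorem logit_div_one_add_exp (u : ℝ) : logit (exp u / (1 + exp u)) = u := by
  have hpos : 0 < 1 + exp u := by positivity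
  have hcompl : 1 - exp u / (1 + exp u) = 1 / (1 + exp u) := by field_simp; ring
  rw [logit, hcompl, log_div (exp_ne_zero u) hpos.ne', log_div one_ne_zero hpos.ne', log_exp,
    log_one]
  ring

theorem logit_image_Ioo : logit '' Ioo 0 1 = univ := by
  refine eq_univ_of_forall fun u ↦ ⟨exp u / (1 + exp u), ⟨by positivity, ?_⟩,
    logit_div_one_add_exp u⟩
  rw [div_lt_one (by positivity)]
  linarith

theorem hasDerivAt_logit {t : ℝ} (ht : t ∈ Ioo 0 1) : HasDerivAt logit (t * (1 - t))⁻¹ t := by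
  have ht₀ : t ≠ 0 := ht.1.ne'
  have ht₁ : 1 - t ≠ 0 := by linarith [ht.2]
  refine ((hasDerivAt_log ht₀).sub (((hasDerivAt_id t).const_sub 1).log ht₁)).congr_deriv ?_
  simp only [id]
  field_simp
  ring

theorem integral_comp_logit {E : Type*} [NormedAddCommGroup E] [NormedSpace ℝ E] (g : ℝ → E) :
    ∫ u, g u = ∫ t in Ioo 0 1, (t * (1 - t))⁻¹ • g (logit t) := by
  rw [← setIntegral_univ, ← logit_image_Ioo, integral_image_eq_integral_abs_deriv_smul
    measurableSet_Ioo (fun t ht ↦ (hasDerivAt_logit ht).hasDerivWithinAt)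
    strictMonoOn_logit.injOn]
  refine setIntegral_congr_fun measurableSet_Ioo fun t ht ↦ ?_
  have : 0 < t * (1 - t) := mul_pos ht.1 (by linarith [ht.2])
  rw [abs_of_pos (inv_pos.2 this)]

theorem two_mul_cosh_half_logit {t : ℝ} (ht : t ∈ Ioo 0 1) :
    2 * cosh (logit t / 2) = exp (-(log t + log (1 - t)) / 2) := by
  have ht₁ : 0 < 1 - t := by linarith [ht.2]
  have e₁ : exp (logit t / 2) = t * exp (-(log t + log (1 - t)) / 2) := by
    rw [show logit t / 2 = log t + -(log t + log (1 - t)) / 2 by unfold logit; ring, exp_add,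
      exp_log ht.1]
  have e₂ : exp (-(logit t / 2)) = (1 - t) * exp (-(log t + log (1 - t)) / 2) := by
    rw [show -(logit t / 2) = log (1 - t) + -(log t + log (1 - t)) / 2 by unfold logit; ring,
      exp_add, exp_log ht₁]
  rw [cosh_eq, e₁, e₂]
  ring

end Real

theorem inv_mul_one_sub_smul_cosh_logit_cpow_mul_cexp {t : ℝ} (ht : t ∈ Ioo 0 1) (s w : ℂ) :
    (t * (1 - t))⁻¹ • (((2 * Real.cosh (Real.logit t / 2) : ℝ) : ℂ) ^ (-(2 * s)) *
      cexp (w * Real.logit t)) =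
      (t : ℂ) ^ (s + w - 1) * (1 - (t : ℂ)) ^ (s - w - 1) := by
  have ht₁ : 0 < 1 - t := by linarith [ht.2]
  have cpow_eq : ∀ {x : ℝ}, 0 < x → ∀ z : ℂ, (x : ℂ) ^ z = cexp (Real.log x * z) := fun hx z ↦ by
    rw [cpow_def_of_ne_zero (ofReal_ne_zero.2 hx.ne'), ofReal_log hx.le]
  have jacobian : (t * (1 - t))⁻¹ = Real.exp (-(Real.log t + Real.log (1 - t))) := by
    rw [Real.exp_neg, Real.exp_add, Real.exp_log ht.1, Real.exp_log ht₁]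
  rw [Real.two_mul_cosh_half_logit ht, real_smul, jacobian, cpow_eq (Real.exp_pos _),
    Real.log_exp, cpow_eq ht.1, ← ofReal_one, ← ofReal_sub, cpow_eq ht₁, ofReal_exp, Real.logit]
  rw [← Complex.exp_add, ← Complex.exp_add, ← Complex.exp_add]
  congr 1
  push_cast
  ring

/-- For `Re s > 1/2` and `r ∈ ℝ`,
`∫_ℝ (2 cosh(u/2))^{-2s} e^{iru} du = B(s + ir, s - ir)`,
where `B(a,b) = Γ(a)Γ(b)/Γ(a+b)`. -/
theorem stmt10 (s : ℂ) (hs : 1 / 2 < s.re) (r : ℝ) :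
    (∫ u : ℝ, ((2 * Real.cosh (u / 2) : ℝ) : ℂ) ^ (-(2 * s)) *
        Complex.exp (Complex.I * r * u)) =
      Complex.Gamma (s + Complex.I * r) * Complex.Gamma (s - Complex.I * r) /
        Complex.Gamma (s + Complex.I * r + (s - Complex.I * r)) := by
  have ha : 0 < (s + I * r).re := by simpa using hs.trans' one_half_pos
  have hb : 0 < (s - I * r).re := by simpa using hs.trans' one_half_pos
  rw [← betaIntegral_eq_Gamma_mul_div _ _ ha hb, betaIntegral,
    intervalIntegral.integral_of_le zero_le_one, integral_Ioc_eq_integral_Ioo,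
    Real.integral_comp_logit]
  refine setIntegral_congr_fun measurableSet_Ioo fun t ht ↦ ?_
  rw [inv_mul_one_sub_smul_cosh_logit_cpow_mul_cexp ht]
end

section
/- For Re(s) > 0 and D > 0, ∫_{√D}^∞ y^{-2s}/(y + √D) dy = (D^{-s}/2) · (ψ(s + 1/2) - ψ(s)), where ψ = Γ'/Γ is the digamma function. -/
open Complex MeasureTheory Set Filter Topology

/-!
The substitution `y = √D / x` turns the integral into `D^{-s} ∫₀¹ x^{2s-1} / (1 + x) dx`.
Writing `1 / (1 + x) = (1 - x) / (1 - x²)` as a geometric series and integrating term by term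
(the terms `x^{2s+2k-1} (1 - x)` are absolutely integrable with summable integrals) gives
`D^{-s} / 2 · ∑ₖ (1 / (s + k) - 1 / (s + k + 1/2))`.
The recurrence `ψ(s + 1) = ψ(s) + 1 / s` telescopes this series to `ψ(s + 1/2) - ψ(s)` up to the
tail `ψ(s + n + 1/2) - ψ(s + n)`. For real `s` the tail lies between `0` and `1 / (s + n)`, since
`ψ` is increasing by the log-convexity of `Γ`; the identity theorem then extends the equality
from the positive reals to the half-plane `Re s > 0`.
-/

noncomputable def digamma (z : ℂ) : ℂ := deriv Complex.Gamma z / Complex.Gamma z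

lemma image_const_div_Ioo_zero_one {c : ℝ} (hc : 0 < c) : (c / ·) '' Ioo 0 1 = Ioi c := by
  ext y
  constructor
  · rintro ⟨x, ⟨hx0, hx1⟩, rfl⟩
    exact (lt_div_iff₀ hx0).2 (by nlinarith)
  · intro (hy : c < y)
    have hy0 : 0 < y := hc.trans hy
    exact ⟨c / y, ⟨by positivity, (div_lt_one hy0).2 hy⟩, by field_simp⟩

lemma integral_Ioi_cpow_neg_div_add (w : ℂ) {c : ℝ} (hc : 0 < c) :
    ∫ y in Ioi c, (y : ℂ) ^ (-w) / (y + c) =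
      (c : ℂ) ^ (-w) * ∫ x in Ioo (0 : ℝ) 1, (x : ℂ) ^ (w - 1) / (1 + x) := by
  have hderiv : ∀ x ∈ Ioo (0 : ℝ) 1, HasDerivWithinAt (c / ·) (-(c / x ^ 2)) (Ioo 0 1) x :=
    fun x hx => by
      simpa [div_eq_mul_inv] using ((hasDerivAt_inv hx.1.ne').const_mul c).hasDerivWithinAt
  have hinj : InjOn (c / ·) (Ioo (0 : ℝ) 1) := fun a _ b _ h => by
    simpa [div_eq_mul_inv, hc.ne'] using h
  rw [← image_const_div_Ioo_zero_one hc,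
    integral_image_eq_integral_abs_deriv_smul measurableSet_Ioo hderiv hinj,
    ← integral_const_mul]
  refine setIntegral_congr_fun measurableSet_Ioo fun x ⟨hx0, _⟩ => ?_
  have hx : (x : ℂ) ≠ 0 := ofReal_ne_zero.2 hx0.ne'
  have hc' : (c : ℂ) ≠ 0 := ofReal_ne_zero.2 hc.ne'
  have h1x : (1 : ℂ) + x ≠ 0 := by exact_mod_cast (by linarith : (1 : ℝ) + x ≠ 0)
  simp only [abs_neg, abs_of_pos (by positivity : 0 < c / x ^ 2), real_smul, ofReal_div,
    ofReal_pow, div_cpow_ofReal_nonneg hc.le hx0.le, cpow_sub _ _ hx, cpow_one, cpow_neg]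
  field_simp

lemma integral_Ioo_zero_one_cpow {u : ℂ} (hu : -1 < u.re) :
    ∫ x in Ioo (0 : ℝ) 1, (x : ℂ) ^ u = (u + 1)⁻¹ := by
  have hu1 : u + 1 ≠ 0 := fun h =>
    hu.ne' (by simpa using congrArg re (eq_neg_of_add_eq_zero_left h))
  rw [← integral_Ioc_eq_integral_Ioo, ← intervalIntegral.integral_of_le zero_le_one,
    integral_cpow (Or.inl hu)]
  simp [hu1]

lemma integrableOn_Ioo_zero_one_cpow {u : ℂ} (hu : -1 < u.re) :
    IntegrableOn (fun x : ℝ => (x : ℂ) ^ u) (Ioo 0 1) :=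
  ((intervalIntegrable_iff_integrableOn_Ioc_of_le zero_le_one).1
    (intervalIntegral.intervalIntegrable_cpow' hu)).mono_set Ioo_subset_Ioc_self

lemma integral_Ioo_zero_one_rpow {u : ℝ} (hu : -1 < u) :
    ∫ x in Ioo (0 : ℝ) 1, x ^ u = (u + 1)⁻¹ := by
  rw [← integral_Ioc_eq_integral_Ioo, ← intervalIntegral.integral_of_le zero_le_one,
    integral_rpow (Or.inl hu), Real.zero_rpow (by linarith), Real.one_rpow]
  simp

lemma integrableOn_Ioo_zero_one_rpow {u : ℝ} (hu : -1 < u) :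
    IntegrableOn (fun x : ℝ => x ^ u) (Ioo 0 1) :=
  ((intervalIntegrable_iff_integrableOn_Ioc_of_le zero_le_one).1
    (intervalIntegral.intervalIntegrable_rpow' hu)).mono_set Ioo_subset_Ioc_self

lemma summable_inv_add_sq (c : ℝ) : Summable fun k : ℕ => ((k + c) ^ 2)⁻¹ := by
  refine ((Real.summable_one_div_nat_add_rpow c 2).2 one_lt_two).congr fun k => ?_
  rw [Real.rpow_two, sq_abs, one_div]

lemma cpow_add_two_mul_sub_cpow {w : ℂ} {x : ℝ} (hx : 0 < x) (k : ℕ) :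
    (x : ℂ) ^ (w + 2 * k - 1) - (x : ℂ) ^ (w + 2 * k) =
      (x : ℂ) ^ (w - 1) * (1 - x) * ((x : ℂ) ^ 2) ^ k := by
  have hx' : (x : ℂ) ≠ 0 := ofReal_ne_zero.2 hx.ne'
  have h (n : ℕ) : (x : ℂ) ^ (w - 1 + n) = (x : ℂ) ^ (w - 1) * (x : ℂ) ^ n := by
    rw [cpow_add _ _ hx', cpow_natCast]
  rw [show w + 2 * k - 1 = w - 1 + (2 * k : ℕ) by push_cast; ring,
    show w + 2 * k = w - 1 + (2 * k + 1 : ℕ) by push_cast; ring, h, h, pow_succ, pow_mul]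
  ring

lemma hasSum_cpow_sub_cpow {w : ℂ} {x : ℝ} (hx : x ∈ Ioo (0 : ℝ) 1) :
    HasSum (fun k : ℕ => (x : ℂ) ^ (w + 2 * k - 1) - (x : ℂ) ^ (w + 2 * k))
      ((x : ℂ) ^ (w - 1) / (1 + x)) := by
  obtain ⟨hx0, hx1⟩ := hx
  have hsq : ‖(x : ℂ) ^ 2‖ < 1 := by
    rw [norm_pow, norm_real, Real.norm_of_nonneg hx0.le]; nlinarith
  have h1x : (1 : ℂ) - x ≠ 0 := by exact_mod_cast (by linarith : (1 : ℝ) - x ≠ 0)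
  have h1x' : (1 : ℂ) + x ≠ 0 := by exact_mod_cast (by linarith : (1 : ℝ) + x ≠ 0)
  have hsum : (x : ℂ) ^ (w - 1) / (1 + x) = (x : ℂ) ^ (w - 1) * (1 - x) * (1 - (x : ℂ) ^ 2)⁻¹ := by
    rw [show (1 : ℂ) - x ^ 2 = (1 - x) * (1 + x) by ring]
    field_simp
  simp_rw [cpow_add_two_mul_sub_cpow hx0, hsum]
  exact (hasSum_geometric_of_norm_lt_one hsq).mul_left _

lemma norm_cpow_sub_one_sub_cpow {u : ℂ} {x : ℝ} (hx : 0 < x) (hx1 : x ≤ 1) :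
    ‖(x : ℂ) ^ (u - 1) - (x : ℂ) ^ u‖ = x ^ (u.re - 1) - x ^ u.re := by
  have hx' : (x : ℂ) ≠ 0 := ofReal_ne_zero.2 hx.ne'
  rw [cpow_sub _ _ hx', cpow_one, Real.rpow_sub_one hx.ne', ← norm_cpow_eq_rpow_re_of_pos hx,
    show (x : ℂ) ^ u / x - (x : ℂ) ^ u = (x : ℂ) ^ u * ((x⁻¹ - 1 : ℝ) : ℂ) by push_cast; ring,
    norm_mul, norm_real, Real.norm_of_nonneg (sub_nonneg.2 (one_le_inv₀ hx |>.2 hx1))]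
  ring

lemma integral_cpow_sub_one_sub_cpow {u : ℂ} (hu : 0 < u.re) :
    ∫ x in Ioo (0 : ℝ) 1, ((x : ℂ) ^ (u - 1) - (x : ℂ) ^ u) = u⁻¹ - (u + 1)⁻¹ := by
  have hu' : -1 < (u - 1).re := by rw [sub_re, one_re]; linarith
  rw [integral_sub (integrableOn_Ioo_zero_one_cpow hu')
    (integrableOn_Ioo_zero_one_cpow (by linarith)), integral_Ioo_zero_one_cpow hu',
    integral_Ioo_zero_one_cpow (by linarith), sub_add_cancel]

lemma integral_rpow_sub_one_sub_rpow {u : ℝ} (hu : 0 < u) :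
    ∫ x in Ioo (0 : ℝ) 1, (x ^ (u - 1) - x ^ u) = u⁻¹ - (u + 1)⁻¹ := by
  rw [integral_sub (integrableOn_Ioo_zero_one_rpow (by linarith))
    (integrableOn_Ioo_zero_one_rpow (by linarith)), integral_Ioo_zero_one_rpow (by linarith),
    integral_Ioo_zero_one_rpow (by linarith), sub_add_cancel]

lemma hasSum_integral_cpow_div_one_add {w : ℂ} (hw : 0 < w.re) :
    HasSum (fun k : ℕ => (w + 2 * k)⁻¹ - (w + 2 * k + 1)⁻¹)
      (∫ x in Ioo (0 : ℝ) 1, (x : ℂ) ^ (w - 1) / (1 + x)) := by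
  have hre (k : ℕ) : (w + 2 * k).re = w.re + 2 * k := by simp
  have hpos (k : ℕ) : 0 < w.re + 2 * k := by positivity
  have hnorm (k : ℕ) : ∫ x in Ioo (0 : ℝ) 1, ‖(x : ℂ) ^ (w + 2 * k - 1) - (x : ℂ) ^ (w + 2 * k)‖ =
      (w.re + 2 * k)⁻¹ - (w.re + 2 * k + 1)⁻¹ := by
    rw [setIntegral_congr_fun measurableSet_Ioo fun x hx => norm_cpow_sub_one_sub_cpow hx.1 hx.2.le,
      hre, integral_rpow_sub_one_sub_rpow (hpos k)]
  have hle (k : ℕ) : (w.re + 2 * k)⁻¹ - (w.re + 2 * k + 1)⁻¹ ≤ ((k + w.re / 2) ^ 2)⁻¹ := by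
    rw [inv_sub_inv (hpos k).ne' (by linarith [hpos k]), add_sub_cancel_left, one_div]
    exact inv_anti₀ (by positivity) (by nlinarith [hpos k])
  have hsum : Summable fun k : ℕ =>
      ∫ x in Ioo (0 : ℝ) 1, ‖(x : ℂ) ^ (w + 2 * k - 1) - (x : ℂ) ^ (w + 2 * k)‖ := by
    simp_rw [hnorm]
    exact (summable_inv_add_sq _).of_nonneg_of_le
      (fun k => sub_nonneg.2 (inv_anti₀ (hpos k) (by linarith))) hle
  have hint (k : ℕ) : IntegrableOn
      (fun x : ℝ => (x : ℂ) ^ (w + 2 * k - 1) - (x : ℂ) ^ (w + 2 * k)) (Ioo 0 1) :=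
    (integrableOn_Ioo_zero_one_cpow (by rw [sub_re, hre, one_re]; linarith [hpos k])).sub
      (integrableOn_Ioo_zero_one_cpow (by rw [hre]; linarith [hpos k]))
  have hterm : (fun k : ℕ => (w + 2 * k)⁻¹ - (w + 2 * k + 1)⁻¹) = fun k : ℕ =>
      ∫ x in Ioo (0 : ℝ) 1, ((x : ℂ) ^ (w + 2 * k - 1) - (x : ℂ) ^ (w + 2 * k)) :=
    funext fun k => (integral_cpow_sub_one_sub_cpow (by rw [hre]; exact hpos k)).symm
  rw [hterm, setIntegral_congr_fun measurableSet_Ioo fun x hx =>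
    (hasSum_cpow_sub_cpow hx).tsum_eq.symm]
  exact hasSum_integral_of_summable_integral_norm hint hsum

lemma norm_inv_sub_inv_add_le {z : ℂ} {σ a : ℝ} (hσ : 0 < σ) (hz : σ ≤ z.re) (ha : 0 ≤ a)
    (k : ℕ) : ‖(z + k)⁻¹ - (z + k + a)⁻¹‖ ≤ a * ((k + σ) ^ 2)⁻¹ := by
  have hre (c : ℝ) (hc : 0 ≤ c) : k + σ ≤ ‖z + k + c‖ :=
    le_trans (by rw [add_re, add_re, natCast_re, ofReal_re]; linarith) (re_le_norm (z + k + c))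
  have h0 := hre 0 le_rfl
  have ha' := hre a ha
  simp only [ofReal_zero, add_zero] at h0
  have hk : 0 < k + σ := by positivity
  rw [inv_sub_inv (norm_pos_iff.1 (hk.trans_le h0)) (norm_pos_iff.1 (hk.trans_le ha')),
    add_sub_cancel_left, norm_div, norm_mul, norm_real, Real.norm_of_nonneg ha, div_eq_mul_inv, sq]
  gcongr

lemma summable_inv_sub_inv_add {z : ℂ} (hz : 0 < z.re) {a : ℝ} (ha : 0 ≤ a) :
    Summable fun k : ℕ => (z + k)⁻¹ - (z + k + a)⁻¹ :=
  .of_norm_bounded ((summable_inv_add_sq _).mul_left a) (norm_inv_sub_inv_add_le hz le_rfl ha)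

lemma analyticOnNhd_tsum_inv_sub_inv_add {a : ℝ} (ha : 0 ≤ a) :
    AnalyticOnNhd ℂ (fun z : ℂ => ∑' k : ℕ, ((z + k)⁻¹ - (z + k + a)⁻¹)) {s | 0 < s.re} := by
  intro s (hs : 0 < s.re)
  have hσ : 0 < s.re / 2 := by positivity
  have hdiff : DifferentiableOn ℂ (fun z : ℂ => ∑' k : ℕ, ((z + k)⁻¹ - (z + k + a)⁻¹))
      {z | s.re / 2 < z.re} := by
    refine differentiableOn_tsum_of_summable_norm ((summable_inv_add_sq _).mul_left a)
      (fun k z hz => ?_) (isOpen_re_gt _)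
      (fun k z hz => norm_inv_sub_inv_add_le hσ (le_of_lt hz) ha k)
    have hz : 0 < z.re := hσ.trans hz
    have hk : z + k ≠ 0 := ne_of_apply_ne re (by rw [add_re, natCast_re, zero_re]; positivity)
    have hka : z + k + a ≠ 0 :=
      ne_of_apply_ne re (by rw [add_re, add_re, natCast_re, ofReal_re, zero_re]; positivity)
    exact (by fun_prop (disch := assumption) :
      DifferentiableAt ℂ (fun z : ℂ => (z + k)⁻¹ - (z + k + a)⁻¹) z).differentiableWithinAt
  exact hdiff.analyticAt ((isOpen_re_gt _).mem_nhds (half_lt_self hs))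

lemma eqOn_re_pos_of_forall_ofReal {f g : ℂ → ℂ} (hf : AnalyticOnNhd ℂ f {s | 0 < s.re})
    (hg : AnalyticOnNhd ℂ g {s | 0 < s.re}) (h : ∀ x : ℝ, 0 < x → f x = g x) :
    EqOn f g {s | 0 < s.re} := by
  have hcoe : Tendsto ((↑) : ℝ → ℂ) (𝓝[≠] 1) (𝓝[≠] 1) :=
    continuous_ofReal.continuousWithinAt.tendsto_nhdsWithin fun x hx => by simpa using hx
  have hfreq : ∃ᶠ x : ℝ in 𝓝[≠] 1, f x = g x :=
    (eventually_nhdsWithin_of_eventually_nhds (eventually_gt_nhds zero_lt_one)).frequently.mono h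
  exact hf.eqOn_of_preconnected_of_frequently_eq hg (convex_halfSpace_re_gt 0).isPreconnected
    (by simp) (hcoe.frequently hfreq)

lemma Real.monotoneOn_logDeriv_Gamma : MonotoneOn (logDeriv Real.Gamma) (Ioi 0) := by
  have hd (x : ℝ) (hx : x ∈ Ioi (0 : ℝ)) : DifferentiableAt ℝ Real.Gamma x :=
    Real.differentiableOn_Gamma_Ioi.differentiableAt (Ioi_mem_nhds hx)
  have hmono := Real.convexOn_log_Gamma.monotoneOn_deriv fun x hx =>
    (hd x hx).log (Real.Gamma_pos_of_pos hx).ne'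
  intro x hx y hy hxy
  rw [← Real.deriv_log_comp_eq_logDeriv (hd x hx) (Real.Gamma_pos_of_pos hx).ne',
    ← Real.deriv_log_comp_eq_logDeriv (hd y hy) (Real.Gamma_pos_of_pos hy).ne']
  exact hmono hx hy hxy

namespace Complex

lemma ne_neg_natCast_of_re_pos {s : ℂ} (hs : 0 < s.re) (m : ℕ) : s ≠ -m := by
  rintro rfl
  simp only [neg_re, natCast_re, Left.neg_pos_iff] at hs
  exact (Nat.cast_nonneg m).not_gt hs

lemma digamma_ofReal {x : ℝ} (hx : 0 < x) :
    digamma x = (logDeriv Real.Gamma x : ℝ) := by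
  have hC : HasDerivAt (fun y : ℝ => Gamma y) (deriv Gamma x) x :=
    (differentiableAt_Gamma _ (ne_neg_natCast_of_re_pos (by simpa using hx))).hasDerivAt.comp_ofReal
  have hR : HasDerivAt (fun y : ℝ => (Real.Gamma y : ℂ)) (deriv Real.Gamma x : ℝ) x :=
    (Real.differentiableOn_Gamma_Ioi.differentiableAt (Ioi_mem_nhds hx)).hasDerivAt.ofReal_comp
  simp only [Gamma_ofReal] at hC
  rw [digamma_def, logDeriv_apply, logDeriv_apply, hC.unique hR, Gamma_ofReal, ofReal_div]

lemma digamma_add_one_of_re_pos {s : ℂ} (hs : 0 < s.re) :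
    digamma (s + 1) = digamma s + s⁻¹ :=
  digamma_apply_add_one s (ne_neg_natCast_of_re_pos hs)

lemma norm_digamma_add_sub_digamma_le {x a : ℝ} (hx : 0 < x) (ha0 : 0 ≤ a) (ha1 : a ≤ 1) :
    ‖digamma (x + a) - digamma x‖ ≤ x⁻¹ := by
  have hmono := Real.monotoneOn_logDeriv_Gamma
  have hxa : 0 < x + a := by linarith
  have hstep : logDeriv Real.Gamma (x + 1) = logDeriv Real.Gamma x + x⁻¹ := by
    have h := digamma_add_one_of_re_pos (s := x) (by simpa using hx)
    rw [← ofReal_one, ← ofReal_add, digamma_ofReal (by linarith), digamma_ofReal hx] at h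
    exact_mod_cast h
  have h1 := hmono hx hxa (by linarith)
  have h2 := hmono hxa (show (0 : ℝ) < x + 1 by linarith) (by linarith)
  rw [← ofReal_add, digamma_ofReal hxa, digamma_ofReal hx, ← ofReal_sub, norm_real,
    Real.norm_of_nonneg (by linarith)]
  linarith

lemma digamma_add_sub_digamma_eq_sum_add {s : ℂ} (hs : 0 < s.re) {a : ℝ} (ha : 0 ≤ a) (n : ℕ) :
    digamma (s + a) - digamma s = ∑ k ∈ Finset.range n, ((s + k)⁻¹ - (s + k + a)⁻¹) +
      (digamma (s + n + a) - digamma (s + n)) := by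
  induction n with
  | zero => simp
  | succ n ih =>
    have hn : 0 < (s + n).re := by rw [add_re, natCast_re]; positivity
    have hna : 0 < (s + n + a).re := by rw [add_re, add_re, natCast_re, ofReal_re]; positivity
    rw [ih, Finset.sum_range_succ, Nat.cast_succ, ← add_assoc, add_right_comm _ 1,
      digamma_add_one_of_re_pos hn, digamma_add_one_of_re_pos hna]
    ring

lemma hasSum_digamma_add_sub_digamma_ofReal {x a : ℝ} (hx : 0 < x) (ha0 : 0 ≤ a) (ha1 : a ≤ 1) :
    HasSum (fun k : ℕ => ((x : ℂ) + k)⁻¹ - ((x : ℂ) + k + a)⁻¹) (digamma (x + a) - digamma x) := by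
  have hx' : 0 < (x : ℂ).re := by simpa using hx
  have htail : Tendsto (fun n : ℕ => digamma ((x : ℂ) + n + a) - digamma (x + n)) atTop (𝓝 0) := by
    refine squeeze_zero_norm (fun n => ?_)
      (tendsto_inv_atTop_zero.comp (tendsto_atTop_add_const_left _ x tendsto_natCast_atTop_atTop))
    simpa using norm_digamma_add_sub_digamma_le (x := x + n) (by positivity) ha0 ha1
  refine (summable_inv_sub_inv_add hx' ha0).hasSum_iff_tendsto_nat.2 ?_
  have h := (tendsto_const_nhds (x := digamma (x + a) - digamma x)).sub htail
  rw [sub_zero] at h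
  refine h.congr fun n => ?_
  rw [digamma_add_sub_digamma_eq_sum_add hx' ha0 n, add_sub_cancel_right]

lemma analyticOnNhd_digamma : AnalyticOnNhd ℂ digamma {s | 0 < s.re} := by
  have hG : AnalyticOnNhd ℂ Gamma {s | 0 < s.re} := DifferentiableOn.analyticOnNhd
    (fun s hs => (differentiableAt_Gamma s (ne_neg_natCast_of_re_pos hs)).differentiableWithinAt)
    (isOpen_re_gt 0)
  exact hG.deriv.div hG fun s hs => Gamma_ne_zero_of_re_pos hs

theorem hasSum_digamma_add_sub_digamma {s : ℂ} (hs : 0 < s.re) {a : ℝ} (ha0 : 0 ≤ a)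
    (ha1 : a ≤ 1) :
    HasSum (fun k : ℕ => (s + k)⁻¹ - (s + k + a)⁻¹) (digamma (s + a) - digamma s) := by
  have hshift : AnalyticOnNhd ℂ (fun z => digamma (z + a)) {s | 0 < s.re} :=
    analyticOnNhd_digamma.comp (analyticOnNhd_id.add analyticOnNhd_const) fun z (hz : 0 < z.re) =>
      show 0 < (z + a).re by rw [add_re, ofReal_re]; positivity
  have heq := eqOn_re_pos_of_forall_ofReal (analyticOnNhd_tsum_inv_sub_inv_add ha0)
    (g := fun z => digamma (z + a) - digamma z) (hshift.sub analyticOnNhd_digamma)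
    fun x hx => (hasSum_digamma_add_sub_digamma_ofReal hx ha0 ha1).tsum_eq
  simpa only [heq hs] using (summable_inv_sub_inv_add hs ha0).hasSum

end Complex

lemma ofReal_sqrt_cpow_neg_two_mul {D : ℝ} (hD : 0 ≤ D) (s : ℂ) :
    (Real.sqrt D : ℂ) ^ (-(2 * s)) = (D : ℂ) ^ (-s) := by
  rcases hD.eq_or_lt with rfl | hD
  · rcases eq_or_ne s 0 with rfl | hs
    · simp
    · simp [zero_cpow, hs]
  have hc : (Real.sqrt D : ℂ) ≠ 0 := ofReal_ne_zero.2 (Real.sqrt_pos.2 hD).ne'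
  conv_rhs => rw [← Real.mul_self_sqrt hD.le, ofReal_mul,
    mul_cpow_ofReal_nonneg (Real.sqrt_nonneg D) (Real.sqrt_nonneg D), ← cpow_add _ _ hc]
  ring_nf

/-- For `Re s > 0` and `D > 0`,
`∫_{√D}^∞ y^{-2s}/(y + √D) dy = (D^{-s}/2)(ψ(s + 1/2) - ψ(s))`. -/
theorem stmt11 (s : ℂ) (hs : 0 < s.re) (D : ℝ) (hD : 0 < D) :
    (∫ y in Set.Ioi (Real.sqrt D), ((y : ℂ) ^ (-(2 * s)) / ((y : ℂ) + Real.sqrt D))) =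
      (D : ℂ) ^ (-s) / 2 * (_root_.digamma (s + 1 / 2) - _root_.digamma s) := by
  have hdigamma := hasSum_digamma_add_sub_digamma hs (a := 1 / 2) (by norm_num) (by norm_num)
  have hintegral := hasSum_integral_cpow_div_one_add (w := 2 * s) (by simpa using hs)
  have hterm (k : ℕ) : (2 * s + 2 * k)⁻¹ - (2 * s + 2 * k + 1)⁻¹ =
      ((s + k)⁻¹ - (s + k + (1 / 2 : ℝ))⁻¹) / 2 := by
    push_cast
    rw [show 2 * s + 2 * k + 1 = 2 * (s + k + 1 / 2) by ring,
      show 2 * s + 2 * k = 2 * (s + k) by ring, mul_inv, mul_inv]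
    ring
  simp_rw [hterm] at hintegral
  rw [integral_Ioi_cpow_neg_div_add (2 * s) (Real.sqrt_pos.2 hD),
    ofReal_sqrt_cpow_neg_two_mul hD.le, hintegral.unique (hdigamma.div_const 2)]
  push_cast
  -- `_root_.digamma` is Mathlib's `Complex.digamma = logDeriv Gamma` unfolded
  change _ = _ * (Complex.digamma _ - Complex.digamma _)
  ring
end
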